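/- arXiv:2602.17579 — 6 statements merged into one kernel-verified Lean document; each statement's English description precedes it below -/
import Mathlib

section
/- Let M be an irreducible generator on a finite set Z with |Z| ≥ 2 and let ζ ∈ P_+(Z). Then for every density φ ∈ D_ζ(Z) the generalised Fisher information satisfies ℛ_ζ(φ,M) ≥ 0, and ℛ_ζ(φ,M) = 0 if and only if φ is the constant function 1. -/
open Finset Filter

/-- A generator (transition rate matrix) on a finite state space `Z`. -/
def IsGenerator {Z : Type*} [Fintype Z] (M : Z → Z → ℝ) : Prop :=
  (∀ z z' : Z, z ≠ z' → 0 ≤ M z z') ∧ ∀ z : Z, ∑ z' : Z, M z z' = 0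

/-- Irreducibility of a generator. -/
def IsIrreducibleGen {Z : Type*} [Fintype Z] (M : Z → Z → ℝ) : Prop :=
  ∀ z z' : Z, z ≠ z' → ∃ (ℓ : ℕ) (p : ℕ → Z), 1 ≤ ℓ ∧ p 0 = z ∧ p ℓ = z' ∧
    ∀ i : ℕ, 1 ≤ i → i ≤ ℓ → 0 < M (p (i - 1)) (p i)

/-- A probability measure on `Z`. -/
def IsProb {Z : Type*} [Fintype Z] (ζ : Z → ℝ) : Prop :=
  (∀ z, 0 ≤ ζ z) ∧ ∑ z : Z, ζ z = 1

/-- A strictly positive probability measure on `Z`. -/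
def IsPosProb {Z : Type*} [Fintype Z] (ζ : Z → ℝ) : Prop :=
  (∀ z, 0 < ζ z) ∧ ∑ z : Z, ζ z = 1

/-- Expectation of `f` with respect to `ζ`. -/
noncomputable def expec {Z : Type*} [Fintype Z] (ζ f : Z → ℝ) : ℝ := ∑ z : Z, f z * ζ z

/-- Variance of `f` with respect to `ζ`. -/
noncomputable def varWrt {Z : Type*} [Fintype Z] (ζ f : Z → ℝ) : ℝ :=
  expec ζ (fun z => f z ^ 2) - (expec ζ f) ^ 2

/-- Generalised Dirichlet form with respect to `ζ`. -/
noncomputable def dirichletForm {Z : Type*} [Fintype Z] (ζ f : Z → ℝ) (M : Z → Z → ℝ) : ℝ :=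
  (1 / 2) * ∑ z : Z, ∑ z' : Z, M z z' * ζ z * (f z - f z') ^ 2

/-- A (strictly positive) probability density with respect to `ζ`. -/
def IsDensity {Z : Type*} [Fintype Z] (ζ φ : Z → ℝ) : Prop :=
  (∀ z, 0 < φ z) ∧ expec ζ φ = 1

/-- Relative entropy with respect to `ζ`. -/
noncomputable def relEnt {Z : Type*} [Fintype Z] (ζ φ : Z → ℝ) : ℝ :=
  ∑ z : Z, φ z * Real.log (φ z) * ζ z

/-- Generalised Fisher information with respect to `ζ`. -/
noncomputable def fisherInfo {Z : Type*} [Fintype Z] (ζ φ : Z → ℝ) (M : Z → Z → ℝ) : ℝ :=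
  ∑ z : Z, ∑ z' : Z, M z z' * ζ z * φ z * (φ z' / φ z - 1 - Real.log (φ z' / φ z))

/-- `f` is a nonconstant function. -/
def Nonconst {Z : Type*} (f : Z → ℝ) : Prop := ∃ z z' : Z, f z ≠ f z'

/-- Generalised Poincaré constant. -/
noncomputable def gPI {Z : Type*} [Fintype Z] (ζ : Z → ℝ) (M : Z → Z → ℝ) : ℝ :=
  sInf { r : ℝ | ∃ f : Z → ℝ, Nonconst f ∧ r = dirichletForm ζ f M / varWrt ζ f }

/-- Generalised log-Sobolev constant. -/
noncomputable def gLSI {Z : Type*} [Fintype Z] (ζ : Z → ℝ) (M : Z → Z → ℝ) : ℝ :=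
  sInf { r : ℝ | ∃ φ : Z → ℝ, IsDensity ζ φ ∧ φ ≠ (fun _ => 1) ∧
    r = fisherInfo ζ φ M / relEnt ζ φ }

lemma aux_g_nonneg (x : ℝ) (hx : 0 < x) : 0 ≤ x - 1 - Real.log x := by
  have := Real.log_le_sub_one_of_pos hx
  linarith

lemma aux_g_eq_zero (x : ℝ) (hx : 0 < x) (h : x - 1 - Real.log x = 0) : x = 1 := by
  by_contra hne
  have := Real.log_lt_sub_one_of_pos hx hne
  linarith

/-- nonnegativity of the generalised Fisher information, with
equality iff `φ` is the constant function `1`. -/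
theorem fisherInfo_nonneg_and_eq_zero_iff_one
    {Z : Type*} [Fintype Z] (hcard : 2 ≤ Fintype.card Z)
    (M : Z → Z → ℝ) (hgen : IsGenerator M) (hirr : IsIrreducibleGen M)
    (ζ : Z → ℝ) (hζ : IsPosProb ζ) (φ : Z → ℝ) (hφ : IsDensity ζ φ) :
    0 ≤ fisherInfo ζ φ M ∧
      (fisherInfo ζ φ M = 0 ↔ φ = fun _ => (1 : ℝ)) := by
  obtain ⟨hφpos, hφexp⟩ := hφ
  obtain ⟨hζpos, hζsum⟩ := hζ
  obtain ⟨hMnn, hMrow⟩ := hgen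
  set g : Z → Z → ℝ :=
    fun z z' => M z z' * ζ z * φ z * (φ z' / φ z - 1 - Real.log (φ z' / φ z)) with hg
  have hterm : ∀ z z', 0 ≤ g z z' := by
    intro z z'
    by_cases hzz : z = z'
    · subst hzz
      simp [hg, div_self (hφpos z).ne']
    · have h1 : 0 ≤ M z z' := hMnn z z' hzz
      have h2 : 0 < φ z' / φ z := div_pos (hφpos z') (hφpos z)
      have h3 := aux_g_nonneg _ h2
      have := mul_nonneg (mul_nonneg (mul_nonneg h1 (hζpos z).le) (hφpos z).le) h3
      simpa [hg] using this
  have hsumnn : 0 ≤ fisherInfo ζ φ M := by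
    apply Finset.sum_nonneg
    intro z _
    exact Finset.sum_nonneg fun z' _ => hterm z z'
  refine ⟨hsumnn, ?_, ?_⟩
  · intro h0
    -- each term is zero
    have hzero : ∀ z z', g z z' = 0 := by
      have h1 : ∀ z ∈ Finset.univ, ∑ z' : Z, g z z' = 0 := by
        rw [← Finset.sum_eq_zero_iff_of_nonneg
          (fun z _ => Finset.sum_nonneg fun z' _ => hterm z z')]
        exact h0
      intro z z'
      have h2 := (Finset.sum_eq_zero_iff_of_nonneg (fun z' _ => hterm z z')).mp
        (h1 z (Finset.mem_univ z)) z' (Finset.mem_univ z')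
      exact h2
    have key : ∀ z z', 0 < M z z' → φ z' = φ z := by
      intro z z' hM
      have h2 : 0 < φ z' / φ z := div_pos (hφpos z') (hφpos z)
      have hmul : M z z' * ζ z * φ z ≠ 0 :=
        (mul_pos (mul_pos hM (hζpos z)) (hφpos z)).ne'
      have h3 : φ z' / φ z - 1 - Real.log (φ z' / φ z) = 0 := by
        have := hzero z z'
        rw [hg] at this
        exact (mul_eq_zero.mp this).resolve_left hmul
      have h4 := aux_g_eq_zero _ h2 h3
      exact (div_eq_one_iff_eq (hφpos z).ne').mp h4
    have hconst : ∀ z z', φ z = φ z' := by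
      intro z z'
      by_cases hzz : z = z'
      · rw [hzz]
      · obtain ⟨ℓ, p, hℓ, hp0, hpℓ, hpos⟩ := hirr z z' hzz
        have hstep : ∀ i : ℕ, i ≤ ℓ → φ (p i) = φ z := by
          intro i
          induction i with
          | zero => intro _; rw [hp0]
          | succ n ih =>
            intro hn
            have h1 : φ (p (n + 1)) = φ (p n) := by
              have := hpos (n + 1) (Nat.le_add_left 1 n) hn
              simpa using key _ _ this
            rw [h1, ih (Nat.le_of_succ_le hn)]
        rw [← hpℓ]
        exact (hstep ℓ le_rfl).symm
    obtain ⟨z₀⟩ := Fintype.card_pos_iff.mp (by omega : 0 < Fintype.card Z)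
    have hc : ∀ z, φ z = φ z₀ := fun z => hconst z z₀
    have : expec ζ φ = φ z₀ := by
      rw [expec]
      calc ∑ z : Z, φ z * ζ z = ∑ z : Z, φ z₀ * ζ z := by
            apply Finset.sum_congr rfl; intro z _; rw [hc z]
        _ = φ z₀ * ∑ z : Z, ζ z := by rw [Finset.mul_sum]
        _ = φ z₀ := by rw [hζsum, mul_one]
    funext z
    rw [hc z, ← this, hφexp]
  · intro h
    subst h
    simp [fisherInfo]
end

section
/- Let M be an irreducible generator on a finite set Z with |Z| ≥ 2 and let ζ ∈ P_+(Z). Then the generalised Fisher information is convex on strictly positive functions: for all φ, ψ : Z → ℝ with φ(z) > 0 and ψ(z) > 0 for all z, and all t ∈ [0,1], ℛ_ζ(tφ + (1−t)ψ, M) ≤ t ℛ_ζ(φ,M) + (1−t) ℛ_ζ(ψ,M). -/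
open Finset Filter

noncomputable def Gfun (a b : ℝ) : ℝ := b - a + a * Real.log (a / b)

lemma logsum (a b c d : ℝ) (ha : 0 < a) (hb : 0 < b) (hc : 0 < c) (hd : 0 < d) :
    (a + c) * Real.log ((a + c) / (b + d)) ≤ a * Real.log (a / b) + c * Real.log (c / d) := by
  have hac : 0 < a + c := by linarith
  have hbd : 0 < b + d := by linarith
  have hx : 0 < ((a + c) * b) / ((b + d) * a) := by positivity
  have hy : 0 < ((a + c) * d) / ((b + d) * c) := by positivity
  have h1 := Real.log_le_sub_one_of_pos hx
  have h2 := Real.log_le_sub_one_of_pos hy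
  have ex : Real.log (((a + c) * b) / ((b + d) * a)) =
      Real.log ((a + c) / (b + d)) - Real.log (a / b) := by
    rw [Real.log_div (by positivity) (by positivity), Real.log_mul (by positivity) hb.ne',
      Real.log_mul (by positivity) ha.ne', Real.log_div hac.ne' hbd.ne',
      Real.log_div ha.ne' hb.ne']
    ring
  have ey : Real.log (((a + c) * d) / ((b + d) * c)) =
      Real.log ((a + c) / (b + d)) - Real.log (c / d) := by
    rw [Real.log_div (by positivity) (by positivity), Real.log_mul (by positivity) hd.ne',
      Real.log_mul (by positivity) hc.ne', Real.log_div hac.ne' hbd.ne',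
      Real.log_div hc.ne' hd.ne']
    ring
  rw [ex] at h1
  rw [ey] at h2
  have ha' := mul_le_mul_of_nonneg_left h1 ha.le
  have hc' := mul_le_mul_of_nonneg_left h2 hc.le
  have key : a * (((a + c) * b) / ((b + d) * a) - 1)
      + c * (((a + c) * d) / ((b + d) * c) - 1) = 0 := by
    field_simp
    ring
  nlinarith [ha', hc']

lemma Gconv (a1 b1 a2 b2 t : ℝ) (ha1 : 0 < a1) (hb1 : 0 < b1) (ha2 : 0 < a2) (hb2 : 0 < b2)
    (ht0 : 0 ≤ t) (ht1 : t ≤ 1) :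
    Gfun (t * a1 + (1 - t) * a2) (t * b1 + (1 - t) * b2)
      ≤ t * Gfun a1 b1 + (1 - t) * Gfun a2 b2 := by
  rcases eq_or_lt_of_le ht0 with h0 | h0
  · simp [← h0]
  rcases eq_or_lt_of_le ht1 with h1 | h1
  · simp [h1]
  have ht1' : 0 < 1 - t := by linarith
  have key := logsum (t * a1) (t * b1) ((1 - t) * a2) ((1 - t) * b2)
    (by positivity) (by positivity) (by positivity) (by positivity)
  have e1 : (t * a1) / (t * b1) = a1 / b1 := mul_div_mul_left _ _ h0.ne'
  have e2 : ((1 - t) * a2) / ((1 - t) * b2) = a2 / b2 := mul_div_mul_left _ _ ht1'.ne'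
  rw [e1, e2] at key
  unfold Gfun
  nlinarith [key]

lemma Gid (a b : ℝ) (ha : 0 < a) (hb : 0 < b) :
    a * (b / a - 1 - Real.log (b / a)) = Gfun a b := by
  rw [Gfun, Real.log_div hb.ne' ha.ne', Real.log_div ha.ne' hb.ne']
  field_simp
  ring

lemma Gself (a : ℝ) (ha : a ≠ 0) : Gfun a a = 0 := by
  simp [Gfun, div_self ha]

/-- convexity of the generalised Fisher information on strictly
positive functions. -/
theorem fisherInfo_convex
    {Z : Type*} [Fintype Z] (hcard : 2 ≤ Fintype.card Z)
    (M : Z → Z → ℝ) (hgen : IsGenerator M) (hirr : IsIrreducibleGen M)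
    (ζ : Z → ℝ) (hζ : IsPosProb ζ)
    (φ ψ : Z → ℝ) (hφ : ∀ z, 0 < φ z) (hψ : ∀ z, 0 < ψ z)
    (t : ℝ) (ht0 : 0 ≤ t) (ht1 : t ≤ 1) :
    fisherInfo ζ (fun z => t * φ z + (1 - t) * ψ z) M ≤
      t * fisherInfo ζ φ M + (1 - t) * fisherInfo ζ ψ M := by
  
  have hmix : ∀ z, 0 < t * φ z + (1 - t) * ψ z := by
    intro z
    rcases eq_or_lt_of_le ht0 with h0 | h0
    · have : (1:ℝ) - t > 0 := by linarith
      nlinarith [hψ z, hφ z]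
    · nlinarith [hψ z, hφ z, mul_nonneg (by linarith : (0:ℝ) ≤ 1 - t) (hψ z).le]
  simp only [fisherInfo]
  rw [Finset.mul_sum, Finset.mul_sum, ← Finset.sum_add_distrib]
  refine Finset.sum_le_sum fun z _ => ?_
  rw [Finset.mul_sum, Finset.mul_sum, ← Finset.sum_add_distrib]
  refine Finset.sum_le_sum fun z' _ => ?_
  rw [mul_assoc (M z z' * ζ z), mul_assoc (M z z' * ζ z), mul_assoc (M z z' * ζ z),
    Gid _ _ (hmix z) (hmix z'), Gid _ _ (hφ z) (hφ z'), Gid _ _ (hψ z) (hψ z')]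
  by_cases h : z = z'
  · subst h
    rw [Gself _ (hmix z).ne', Gself _ (hφ z).ne', Gself _ (hψ z).ne']
    simp
  · have hc : 0 ≤ M z z' * ζ z := mul_nonneg (hgen.1 z z' h) (hζ.1 z).le
    calc M z z' * ζ z * Gfun (t * φ z + (1 - t) * ψ z) (t * φ z' + (1 - t) * ψ z')
        ≤ M z z' * ζ z * (t * Gfun (φ z) (φ z') + (1 - t) * Gfun (ψ z) (ψ z')) :=
          mul_le_mul_of_nonneg_left
            (Gconv _ _ _ _ _ (hφ z) (hφ z') (hψ z) (hψ z') ht0 ht1) hc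
      _ = t * (M z z' * ζ z * Gfun (φ z) (φ z'))
          + (1 - t) * (M z z' * ζ z * Gfun (ψ z) (ψ z')) := by ring
end

section
/- Let M be an irreducible generator on a finite set Z with |Z| ≥ 2, let ζ ∈ P_+(Z), let f : Z → ℝ satisfy E_ζ[f] = 0, and let δ ∈ ℝ satisfy |δ| · ‖f‖∞ ≤ 1/2. Then 1 + δf ∈ D_ζ(Z) and |ℛ_ζ(1 + δf, M) − δ² ℰ_ζ(f,M)| ≤ 3 |δ|³ ‖M‖∞ |Z| ‖f‖∞³. -/
open Finset Filter

/-- Supremum norm of a function on a finite type. -/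
noncomputable def supNorm {Z : Type*} [Fintype Z] (f : Z → ℝ) : ℝ := ⨆ z : Z, |f z|

/-- Supremum norm of a matrix on a finite type. -/
noncomputable def supNormMat {Z : Type*} [Fintype Z] (M : Z → Z → ℝ) : ℝ :=
  ⨆ p : Z × Z, |M p.1 p.2|


private lemma myBdd {α : Type*} [Fintype α] (f : α → ℝ) : BddAbove (Set.range f) :=
  Set.Finite.bddAbove (Set.finite_range f)

private lemma abs_le_supNorm' {Z : Type*} [Fintype Z] (f : Z → ℝ) (z : Z) :
    |f z| ≤ ⨆ z : Z, |f z| := le_ciSup (myBdd (fun z => |f z|)) z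

private lemma log_taylor' {x : ℝ} (hx : |x| ≤ 1/2) :
    |x - x^2/2 - Real.log (1+x)| ≤ (4/3) * |x|^3 := by
  have h1 : |(-x)| < 1 := by rw [abs_neg]; linarith
  have H := Real.abs_log_sub_add_sum_range_le h1 3
  rw [abs_neg] at H
  have hE : (∑ i ∈ Finset.range 3, (-x) ^ (i + 1) / (i + 1)) = -x + x^2/2 - x^3/3 := by
    simp [Finset.sum_range_succ]; ring
  rw [hE] at H
  have h2 : (1 : ℝ) - -x = 1 + x := by ring
  rw [h2] at H
  have h3 : |x| ^ 4 / (1 - |x|) ≤ |x|^3 := by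
    rw [div_le_iff₀ (by linarith : (0:ℝ) < 1 - |x|)]
    have h4 : |x|^4 = |x|^3 * |x| := by ring
    nlinarith [abs_nonneg x, pow_nonneg (abs_nonneg x) 3]
  have H2 : |(-x + x^2/2 - x^3/3) + Real.log (1+x)| ≤ |x|^3 := H.trans h3
  have hid : x - x^2/2 - Real.log (1+x) = -(((-x + x^2/2 - x^3/3) + Real.log (1+x))) - x^3/3 := by
    ring
  rw [hid]
  have habs3 : |x^3/3| = |x|^3/3 := by
    rw [abs_div, abs_pow]
    norm_num
  calc |-(((-x + x^2/2 - x^3/3) + Real.log (1+x))) - x^3/3|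
      ≤ |-(((-x + x^2/2 - x^3/3) + Real.log (1+x)))| + |x^3/3| := abs_sub _ _
    _ ≤ |x|^3 + |x|^3/3 := by
        rw [abs_neg, habs3]
        exact add_le_add H2 le_rfl
    _ ≤ (4/3) * |x|^3 := by linarith

private lemma pair_bound' {u v r : ℝ} (hu : |u| ≤ r) (hv : |v| ≤ r) (hr : r ≤ 1/2) :
    |(1+u) * ((1+v)/(1+u) - 1 - Real.log ((1+v)/(1+u))) - (1/2)*(v-u)^2| ≤ (9/2) * r^3 := by
  have hr0 : 0 ≤ r := le_trans (abs_nonneg u) hu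
  have hu2 : |u| ≤ 1/2 := hu.trans hr
  have hv2 : |v| ≤ 1/2 := hv.trans hr
  obtain ⟨hu1, hu1'⟩ := abs_le.mp hu2
  obtain ⟨hv1, hv1'⟩ := abs_le.mp hv2
  have hau : (0:ℝ) < 1 + u := by linarith
  have hav : (0:ℝ) < 1 + v := by linarith
  have hlog : Real.log ((1+v)/(1+u)) = Real.log (1+v) - Real.log (1+u) :=
    Real.log_div (ne_of_gt hav) (ne_of_gt hau)
  have hdiv : (1+u) * ((1+v)/(1+u)) = 1+v := mul_div_cancel₀ _ (ne_of_gt hau)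
  have hid : (1+u) * ((1+v)/(1+u) - 1 - Real.log ((1+v)/(1+u))) - (1/2)*(v-u)^2
      = u*(v^2-u^2)/2 + (1+u)*((v - v^2/2 - Real.log (1+v)) - (u - u^2/2 - Real.log (1+u))) := by
    rw [hlog, mul_sub, mul_sub, hdiv]; ring
  rw [hid]
  have hHu := log_taylor' hu2
  have hHv := log_taylor' hv2
  have hu3 : |u|^3 ≤ r^3 := pow_le_pow_left₀ (abs_nonneg u) hu 3
  have hv3 : |v|^3 ≤ r^3 := pow_le_pow_left₀ (abs_nonneg v) hv 3
  have hsq : |v^2 - u^2| ≤ r^2 := by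
    rw [abs_sub_le_iff]
    constructor <;> nlinarith [sq_abs u, sq_abs v, sq_nonneg u, sq_nonneg v,
      pow_le_pow_left₀ (abs_nonneg u) hu 2, pow_le_pow_left₀ (abs_nonneg v) hv 2]
  have h1 : |u*(v^2-u^2)/2| ≤ r^3/2 := by
    rw [abs_div, abs_mul]
    have : |u| * |v^2 - u^2| ≤ r * r^2 :=
      mul_le_mul hu hsq (abs_nonneg _) hr0
    have h2 : |(2:ℝ)| = 2 := by norm_num
    rw [h2]
    nlinarith
  have h2 : |(1+u)*((v - v^2/2 - Real.log (1+v)) - (u - u^2/2 - Real.log (1+u)))| ≤ 4 * r^3 := by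
    rw [abs_mul]
    have ha : |1+u| ≤ 3/2 := by rw [abs_le]; constructor <;> linarith
    have hd : |(v - v^2/2 - Real.log (1+v)) - (u - u^2/2 - Real.log (1+u))| ≤ (8/3) * r^3 := by
      calc |(v - v^2/2 - Real.log (1+v)) - (u - u^2/2 - Real.log (1+u))|
          ≤ |v - v^2/2 - Real.log (1+v)| + |u - u^2/2 - Real.log (1+u)| := abs_sub _ _
        _ ≤ (4/3) * |v|^3 + (4/3) * |u|^3 := add_le_add hHv hHu
        _ ≤ (8/3) * r^3 := by linarith
    calc |1+u| * |(v - v^2/2 - Real.log (1+v)) - (u - u^2/2 - Real.log (1+u))|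
        ≤ (3/2) * ((8/3) * r^3) := by
          apply mul_le_mul ha hd (abs_nonneg _) (by norm_num)
      _ = 4 * r^3 := by ring
  calc |u*(v^2-u^2)/2 + (1+u)*((v - v^2/2 - Real.log (1+v)) - (u - u^2/2 - Real.log (1+u)))|
      ≤ |u*(v^2-u^2)/2| + |(1+u)*((v - v^2/2 - Real.log (1+v)) - (u - u^2/2 - Real.log (1+u)))| :=
        abs_add_le _ _
    _ ≤ r^3/2 + 4*r^3 := add_le_add h1 h2
    _ ≤ (9/2) * r^3 := by linarith


private lemma sum_bound' {Z : Type*} [Fintype Z] [Nonempty Z] (M : Z → Z → ℝ)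
    (hM0 : ∀ z z' : Z, z ≠ z' → 0 ≤ M z z') (hrow : ∀ z : Z, ∑ z' : Z, M z z' = 0)
    (ζ : Z → ℝ) (hζ0 : ∀ z, 0 ≤ ζ z) (hζ1 : ∑ z : Z, ζ z = 1)
    (K : ℝ) (hMK : ∀ z z', |M z z'| ≤ K)
    (D : Z → Z → ℝ) (C : ℝ) (hDC : ∀ z z', |D z z'| ≤ C) (hDdiag : ∀ z, D z z = 0) :
    |∑ z : Z, ∑ z' : Z, M z z' * ζ z * D z z'| ≤ K * C := by
  classical
  have hC0 : 0 ≤ C :=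
    le_trans (abs_nonneg _) (hDC (Classical.arbitrary Z) (Classical.arbitrary Z))
  have hinner : ∀ z : Z, |∑ z' : Z, M z z' * ζ z * D z z'| ≤ ζ z * (K * C) := by
    intro z
    have hz : ∑ z' : Z, M z z' * ζ z * D z z'
        = ∑ z' ∈ Finset.univ.erase z, M z z' * ζ z * D z z' := by
      rw [← Finset.sum_erase_add _ _ (Finset.mem_univ z), hDdiag z]
      simp
    rw [hz]
    calc |∑ z' ∈ Finset.univ.erase z, M z z' * ζ z * D z z'|
        ≤ ∑ z' ∈ Finset.univ.erase z, |M z z' * ζ z * D z z'| := Finset.abs_sum_le_sum_abs _ _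
      _ ≤ ∑ z' ∈ Finset.univ.erase z, M z z' * ζ z * C := by
          apply Finset.sum_le_sum
          intro z' hz'
          have hne : z ≠ z' := (Finset.ne_of_mem_erase hz').symm
          have hM := hM0 z z' hne
          rw [abs_mul, abs_mul, abs_of_nonneg hM, abs_of_nonneg (hζ0 z)]
          exact mul_le_mul_of_nonneg_left (hDC z z') (mul_nonneg hM (hζ0 z))
      _ = (∑ z' ∈ Finset.univ.erase z, M z z') * (ζ z * C) := by
          rw [Finset.sum_mul]; exact Finset.sum_congr rfl fun _ _ => by ring
      _ ≤ K * (ζ z * C) := by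
          apply mul_le_mul_of_nonneg_right _ (mul_nonneg (hζ0 z) hC0)
          have h1 : (∑ z' ∈ Finset.univ.erase z, M z z') + M z z = 0 := by
            rw [Finset.sum_erase_add _ _ (Finset.mem_univ z)]; exact hrow z
          have h2 : -(M z z) ≤ |M z z| := neg_le_abs _
          have h3 := hMK z z
          linarith
      _ = ζ z * (K * C) := by ring
  calc |∑ z : Z, ∑ z' : Z, M z z' * ζ z * D z z'|
      ≤ ∑ z : Z, |∑ z' : Z, M z z' * ζ z * D z z'| := Finset.abs_sum_le_sum_abs _ _
    _ ≤ ∑ z : Z, ζ z * (K * C) := Finset.sum_le_sum fun z _ => hinner z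
    _ = (∑ z : Z, ζ z) * (K * C) := by rw [Finset.sum_mul]
    _ = K * C := by rw [hζ1, one_mul]

/-- quadratic expansion of the generalised Fisher information
around the constant density `1`. -/
theorem fisherInfo_expansion
    {Z : Type*} [Fintype Z] (hcard : 2 ≤ Fintype.card Z)
    (M : Z → Z → ℝ) (hgen : IsGenerator M) (hirr : IsIrreducibleGen M)
    (ζ : Z → ℝ) (hζ : IsPosProb ζ)
    (f : Z → ℝ) (hf : expec ζ f = 0)
    (δ : ℝ) (hδ : |δ| * supNorm f ≤ 1 / 2) :
    IsDensity ζ (fun z => 1 + δ * f z) ∧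
      |fisherInfo ζ (fun z => 1 + δ * f z) M - δ ^ 2 * dirichletForm ζ f M| ≤
        3 * |δ| ^ 3 * supNormMat M * (Fintype.card Z : ℝ) * supNorm f ^ 3 := by
  obtain ⟨hM0, hMrow⟩ := hgen
  obtain ⟨hζ0, hζ1⟩ := hζ
  have hne : Nonempty Z := Fintype.card_pos_iff.mp (by omega)
  have hs0 : 0 ≤ supNorm f :=
    le_trans (abs_nonneg _) (abs_le_supNorm' f (Classical.arbitrary Z))
  have hδ0 : 0 ≤ |δ| := abs_nonneg δ
  have hr0 : 0 ≤ |δ| * supNorm f := mul_nonneg hδ0 hs0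
  have hbd : ∀ z, |δ * f z| ≤ |δ| * supNorm f := fun z => by
    rw [abs_mul]; exact mul_le_mul_of_nonneg_left (abs_le_supNorm' f z) hδ0
  have hpos : ∀ z, 0 < 1 + δ * f z := fun z => by
    have h := abs_le.mp ((hbd z).trans hδ)
    linarith [h.1]
  have hden : IsDensity ζ (fun z => 1 + δ * f z) := by
    refine ⟨hpos, ?_⟩
    have hE : expec ζ (fun z => 1 + δ * f z) = (∑ z : Z, ζ z) + δ * expec ζ f := by
      simp only [expec, add_mul, one_mul, Finset.sum_add_distrib, mul_assoc, ← Finset.mul_sum]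
    rw [hE, hζ1, hf]; ring
  refine ⟨hden, ?_⟩
  have key : fisherInfo ζ (fun z => 1 + δ * f z) M - δ ^ 2 * dirichletForm ζ f M
      = ∑ z : Z, ∑ z' : Z, M z z' * ζ z *
          ((1 + δ * f z) * ((1 + δ * f z') / (1 + δ * f z) - 1 -
            Real.log ((1 + δ * f z') / (1 + δ * f z))) -
           (1/2) * (δ * f z' - δ * f z)^2) := by
    simp only [fisherInfo, dirichletForm, Finset.mul_sum, ← Finset.sum_sub_distrib]
    refine Finset.sum_congr rfl fun z _ => ?_
    refine Finset.sum_congr rfl fun z' _ => ?_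
    ring
  rw [key]
  have hDdiag : ∀ z : Z,
      ((1 + δ * f z) * ((1 + δ * f z) / (1 + δ * f z) - 1 -
        Real.log ((1 + δ * f z) / (1 + δ * f z))) -
       (1/2) * (δ * f z - δ * f z)^2) = 0 := by
    intro z
    rw [div_self (ne_of_gt (hpos z))]
    simp
  have hDC : ∀ z z' : Z,
      |(1 + δ * f z) * ((1 + δ * f z') / (1 + δ * f z) - 1 -
          Real.log ((1 + δ * f z') / (1 + δ * f z))) -
        (1/2) * (δ * f z' - δ * f z)^2| ≤ (9/2) * (|δ| * supNorm f)^3 :=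
    fun z z' => pair_bound' (hbd z) (hbd z') hδ
  have hMK : ∀ z z' : Z, |M z z'| ≤ supNormMat M := fun z z' =>
    le_ciSup (myBdd (fun p : Z × Z => |M p.1 p.2|)) ((z, z') : Z × Z)
  have hK0 : 0 ≤ supNormMat M :=
    le_trans (abs_nonneg _) (hMK (Classical.arbitrary Z) (Classical.arbitrary Z))
  have main := sum_bound' M hM0 hMrow ζ (fun z => le_of_lt (hζ0 z)) hζ1
    (supNormMat M) hMK _ ((9/2) * (|δ| * supNorm f)^3) hDC hDdiag
  refine main.trans ?_
  have hcard2 : (2 : ℝ) ≤ (Fintype.card Z : ℝ) := by exact_mod_cast hcard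
  have hrr : (|δ| * supNorm f)^3 = |δ|^3 * supNorm f^3 := by ring
  nlinarith [pow_nonneg hr0 3, mul_nonneg (pow_nonneg hr0 3) hK0,
    mul_nonneg hK0 (pow_nonneg hr0 3)]
end

section
/- Let Z be a finite set with |Z| ≥ 2, let ζ ∈ P_+(Z), let f : Z → ℝ satisfy E_ζ[f] = 0, and let δ ∈ ℝ satisfy |δ| · ‖f‖∞ ≤ 1/2. Then |H_ζ(1 + δf) − (δ²/2) var_ζ(f)| ≤ (1/3) |δ|³ ‖f‖∞³. -/
open Finset Filter

-- k(t) = log(1+t) - t + t^2 ≥ 0 for t ≥ -1/2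
lemma logKey {t : ℝ} (ht : -(1/2) ≤ t) : t - t^2 ≤ Real.log (1+t) := by
  rcases le_or_gt 0 t with h | h
  · have h1 : (0:ℝ) < 1 + t := by linarith
    have h2 : Real.log (1/(1+t)) ≤ 1/(1+t) - 1 :=
      Real.log_le_sub_one_of_pos (by positivity)
    rw [Real.log_div one_ne_zero (ne_of_gt h1), Real.log_one] at h2
    have h3 : t - t^2 ≤ t/(1+t) := by
      rw [le_div_iff₀ h1]
      nlinarith
    have h4 : t/(1+t) ≤ Real.log (1+t) := by
      have : (1:ℝ)/(1+t) - 1 = -(t/(1+t)) := by field_simp; ring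
      linarith [h2, this ▸ h2]
    linarith
  · set x : ℝ := -t with hx
    have hx1 : |x| < 1 := by rw [abs_of_nonneg (by linarith)]; linarith
    have := Real.abs_log_sub_add_sum_range_le hx1 4
    have hsum : (∑ i ∈ Finset.range 4, x ^ (i+1) / (i+1)) = x + x^2/2 + x^3/3 + x^4/4 := by
      norm_num [Finset.sum_range_succ]
    rw [hsum] at this
    have h1 : (1:ℝ) - x = 1 + t := by rw [hx]; ring
    rw [h1] at this
    have hxb : |x| ≤ 1/2 := by rw [abs_of_nonneg (by linarith)]; linarith
    have hd : |x|^5 / (1 - |x|) ≤ 2 * |x|^5 := by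
      rw [div_le_iff₀ (by linarith [abs_nonneg x])]
      nlinarith [pow_nonneg (abs_nonneg x) 5]
    have h5 : |x|^5 = x^5 := by rw [abs_of_nonneg (by linarith)]
    rw [h5] at hd
    have h6 : -(x + x^2/2 + x^3/3 + x^4/4) - 2*x^5 ≤ Real.log (1+t) := by
      have h := abs_le.mp this
      norm_num at h
      rw [h5] at h
      linarith [h.1]
    -- need: t - t^2 ≤ -(x + x^2/2 + x^3/3 + x^4/4) - 2*x^5, i.e. with x = -t
    have h7 : t - t^2 ≤ -(x + x^2/2 + x^3/3 + x^4/4) - 2*x^5 := by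
      rw [hx]
      -- reduces to 0 ≤ t^2/2 + t^3/3 - t^4/4 + 2 t^5 for t ∈ [-1/2,0]
      nlinarith [sq_nonneg t, sq_nonneg (t + 1/2), sq_nonneg (t*(t+1/2)),
        sq_nonneg (t^2*(t+1/2)), mul_nonneg (sq_nonneg t) (by linarith : (0:ℝ) ≤ t + 1/2),
        sq_nonneg (t - 5/16)]
    linarith

lemma entAux {x : ℝ} (hx : |x| ≤ 1/2) :
    |(1+x) * Real.log (1+x) - x - x^2/2| ≤ |x|^3 / 3 := by
  have hxl : -(1/2) ≤ x := by linarith [neg_abs_le x]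
  have hxu : x ≤ 1/2 := le_trans (le_abs_self x) hx
  set F : ℝ → ℝ := fun y => (1+y) * Real.log (1+y) - y - y^2/2 + y^3/3 with hF
  set G : ℝ → ℝ := fun y => (1+y) * Real.log (1+y) - y - y^2/2 with hG
  have hder : ∀ y : ℝ, -(1/2) ≤ y →
      HasDerivAt G (Real.log (1+y) - y) y ∧ HasDerivAt F (Real.log (1+y) - y + y^2) y := by
    intro y hy
    have h1 : (0:ℝ) < 1 + y := by linarith
    have hlog : HasDerivAt (fun z : ℝ => Real.log (1+z)) (1/(1+y)) y := by
      have := ((hasDerivAt_id y).const_add 1).log (ne_of_gt h1)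
      simpa using this
    have hmul : HasDerivAt (fun z : ℝ => (1+z) * Real.log (1+z))
        (1 * Real.log (1+y) + (1+y) * (1/(1+y))) y :=
      HasDerivAt.mul (by simpa using (hasDerivAt_id y).const_add 1) hlog
    have hmul' : HasDerivAt (fun z : ℝ => (1+z) * Real.log (1+z)) (Real.log (1+y) + 1) y := by
      convert hmul using 1; field_simp
    constructor
    · have := (hmul'.sub (hasDerivAt_id y)).sub
        (((hasDerivAt_pow 2 y)).div_const 2)
      exact this.congr_deriv (by norm_num)
    · have := ((hmul'.sub (hasDerivAt_id y)).sub
        (((hasDerivAt_pow 2 y)).div_const 2)).add ((hasDerivAt_pow 3 y).div_const 3)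
      exact this.congr_deriv (by norm_num)
  have hset : Convex ℝ (Set.Ici (-(1/2):ℝ)) := convex_Ici _
  have hintF : interior (Set.Ici (-(1/2):ℝ)) = Set.Ioi (-(1/2):ℝ) := interior_Ici
  have hFc : ContinuousOn F (Set.Ici (-(1/2):ℝ)) :=
    fun y hy => ((hder y hy).2).continuousAt.continuousWithinAt
  have hGc : ContinuousOn G (Set.Ici (-(1/2):ℝ)) :=
    fun y hy => ((hder y hy).1).continuousAt.continuousWithinAt
  have hFmono : MonotoneOn F (Set.Ici (-(1/2):ℝ)) := by
    apply monotoneOn_of_deriv_nonneg hset hFc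
    · intro y hy
      rw [hintF] at hy
      exact ((hder y (le_of_lt hy)).2).differentiableAt.differentiableWithinAt
    · intro y hy
      rw [hintF] at hy
      rw [((hder y (le_of_lt hy)).2).deriv]
      have := logKey (le_of_lt hy)
      linarith
  have hGanti : AntitoneOn G (Set.Ici (-(1/2):ℝ)) := by
    apply antitoneOn_of_deriv_nonpos hset hGc
    · intro y hy
      rw [hintF] at hy
      exact ((hder y (le_of_lt hy)).1).differentiableAt.differentiableWithinAt
    · intro y hy
      rw [hintF] at hy
      rw [((hder y (le_of_lt hy)).1).deriv]
      have h1 : (0:ℝ) < 1 + y := by rw [Set.mem_Ioi] at hy; linarith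
      have := Real.log_le_sub_one_of_pos h1
      linarith
  have hF0 : F 0 = 0 := by simp [hF]
  have hG0 : G 0 = 0 := by simp [hG]
  have hxmem : x ∈ Set.Ici (-(1/2):ℝ) := hxl
  have h0mem : (0:ℝ) ∈ Set.Ici (-(1/2):ℝ) := by norm_num
  rcases le_or_gt 0 x with h | h
  · have h1 : G x ≤ 0 := hG0 ▸ hGanti h0mem hxmem h
    have h2 : 0 ≤ F x := hF0 ▸ hFmono h0mem hxmem h
    rw [abs_of_nonneg h]
    rw [abs_of_nonpos h1]
    simp only [hF, hG] at *
    linarith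
  · have h1 : 0 ≤ G x := hG0 ▸ hGanti hxmem h0mem (le_of_lt h)
    have h2 : F x ≤ 0 := hF0 ▸ hFmono hxmem h0mem (le_of_lt h)
    rw [abs_of_neg h]
    rw [abs_of_nonneg h1]
    simp only [hF, hG] at *
    nlinarith

/-- quadratic expansion of the relative entropy around the
constant density `1`. -/
theorem relEnt_expansion
    {Z : Type*} [Fintype Z] (hcard : 2 ≤ Fintype.card Z)
    (ζ : Z → ℝ) (hζ : IsPosProb ζ)
    (f : Z → ℝ) (hf : expec ζ f = 0)
    (δ : ℝ) (hδ : |δ| * supNorm f ≤ 1 / 2) :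
    |relEnt ζ (fun z => 1 + δ * f z) - δ ^ 2 / 2 * varWrt ζ f| ≤
      (1 / 3) * |δ| ^ 3 * supNorm f ^ 3 := by
  have hne : Nonempty Z := Fintype.card_pos_iff.mp (by omega)
  set M := supNorm f with hM
  simp only [supNorm] at hM
  have hfM : ∀ z, |f z| ≤ M := by
    intro z
    rw [hM]
    exact le_ciSup (Set.Finite.bddAbove (Set.finite_range fun z => |f z|)) z
  have hM0 : 0 ≤ M := le_trans (abs_nonneg _) (hfM (Classical.arbitrary Z))
  have hbd : ∀ z, |δ * f z| ≤ |δ| * M := by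
    intro z
    rw [abs_mul]
    exact mul_le_mul_of_nonneg_left (hfM z) (abs_nonneg δ)
  have hvar : varWrt ζ f = ∑ z, f z ^ 2 * ζ z := by
    simp only [varWrt, expec]
    rw [show (∑ z, f z * ζ z) = 0 from hf]
    ring
  have key : relEnt ζ (fun z => 1 + δ * f z) - δ ^ 2 / 2 * varWrt ζ f
      = ∑ z, ((1 + δ * f z) * Real.log (1 + δ * f z) - δ * f z - (δ * f z)^2/2) * ζ z := by
    have h1 : δ * ∑ z, f z * ζ z = 0 := by
      rw [show (∑ z, f z * ζ z) = expec ζ f from rfl, hf, mul_zero]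
    rw [hvar, relEnt]
    rw [Finset.sum_congr rfl (fun z _ => by
      ring_nf : ∀ z ∈ Finset.univ,
        ((1 + δ * f z) * Real.log (1 + δ * f z) - δ * f z - (δ * f z)^2/2) * ζ z
        = (1 + δ * f z) * Real.log (1 + δ * f z) * ζ z - δ * (f z * ζ z)
          - δ^2/2 * (f z ^2 * ζ z))]
    rw [Finset.sum_sub_distrib, Finset.sum_sub_distrib, ← Finset.mul_sum, ← Finset.mul_sum, h1]
    ring
  rw [key]
  calc |∑ z, ((1 + δ * f z) * Real.log (1 + δ * f z) - δ * f z - (δ * f z)^2/2) * ζ z|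
      ≤ ∑ z, |((1 + δ * f z) * Real.log (1 + δ * f z) - δ * f z - (δ * f z)^2/2) * ζ z| :=
        Finset.abs_sum_le_sum_abs _ _
    _ ≤ ∑ z, (|δ| * M)^3 / 3 * ζ z := by
        apply Finset.sum_le_sum
        intro z _
        rw [abs_mul, abs_of_pos (hζ.1 z)]
        apply mul_le_mul_of_nonneg_right _ (le_of_lt (hζ.1 z))
        have h1 : |δ * f z| ≤ 1/2 := le_trans (hbd z) hδ
        have h2 := entAux h1
        have h3 : |δ * f z|^3 ≤ (|δ| * M)^3 :=
          pow_le_pow_left₀ (abs_nonneg _) (hbd z) 3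
        calc |(1 + δ * f z) * Real.log (1 + δ * f z) - δ * f z - (δ * f z)^2/2|
            ≤ |δ * f z|^3 / 3 := h2
          _ ≤ (|δ| * M)^3 / 3 := by linarith
    _ = (1/3) * |δ|^3 * M^3 := by
        rw [← Finset.mul_sum, hζ.2]
        ring
end

section
/- Let M be an irreducible generator on a finite set Z with |Z| ≥ 2. The generalised Poincaré constant is continuous on P_+(Z): if ζ ∈ P_+(Z) and (ζ_n) is a sequence in P_+(Z) with ζ_n(z) → ζ(z) for every z ∈ Z, then α_gPI(ζ_n, M) → α_gPI(ζ, M) as n → ∞. -/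
open Finset Filter

section AuxGPI

variable {Z : Type*} [Fintype Z]

/-- the normalization set -/
def Kset (Z : Type*) [Fintype Z] : Set (Z → ℝ) :=
  {f : Z → ℝ | ∑ z : Z, f z = 0 ∧ ∑ z : Z, (f z) ^ 2 = 1}

lemma expec_affine (η : Z → ℝ) (hη : ∑ z : Z, η z = 1) (a b : ℝ) (f : Z → ℝ) :
    expec η (fun z => a * f z + b) = a * expec η f + b := by
  have h : ∀ z : Z, (a * f z + b) * η z = a * (f z * η z) + b * η z := fun z => by ring
  simp_rw [expec, h, Finset.sum_add_distrib, ← Finset.mul_sum, hη, mul_one]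

lemma expec_affine_sq (η : Z → ℝ) (hη : ∑ z : Z, η z = 1) (a b : ℝ) (f : Z → ℝ) :
    expec η (fun z => (a * f z + b) ^ 2)
      = a ^ 2 * expec η (fun z => f z ^ 2) + 2 * a * b * expec η f + b ^ 2 := by
  have h : ∀ z : Z, (a * f z + b) ^ 2 * η z
      = a ^ 2 * (f z ^ 2 * η z) + 2 * a * b * (f z * η z) + b ^ 2 * η z := fun z => by ring
  simp_rw [expec, h, Finset.sum_add_distrib, ← Finset.mul_sum, hη, mul_one]

lemma varWrt_affine (η : Z → ℝ) (hη : ∑ z : Z, η z = 1) (a b : ℝ) (f : Z → ℝ) :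
    varWrt η (fun z => a * f z + b) = a ^ 2 * varWrt η f := by
  have h1 := expec_affine η hη a b f
  have h2 := expec_affine_sq η hη a b f
  simp only [varWrt]
  rw [h2, h1]; ring

lemma dirichletForm_affine (η : Z → ℝ) (M : Z → Z → ℝ) (a b : ℝ) (f : Z → ℝ) :
    dirichletForm η (fun z => a * f z + b) M = a ^ 2 * dirichletForm η f M := by
  have h : ∀ z z' : Z, M z z' * η z * ((a * f z + b) - (a * f z' + b)) ^ 2
      = a ^ 2 * (M z z' * η z * (f z - f z') ^ 2) := fun z z' => by ring
  simp_rw [dirichletForm, h, ← Finset.mul_sum]; ring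

lemma varWrt_eq_expec_sq (η : Z → ℝ) (hη : ∑ z : Z, η z = 1) (f : Z → ℝ) :
    varWrt η f = ∑ z : Z, (f z - expec η f) ^ 2 * η z := by
  have h : ∀ z : Z, (f z - expec η f) ^ 2 * η z
      = f z ^ 2 * η z - (2 * expec η f) * (f z * η z) + (expec η f) ^ 2 * η z :=
    fun z => by ring
  simp_rw [h, Finset.sum_add_distrib, Finset.sum_sub_distrib, ← Finset.mul_sum, hη, mul_one]
  simp only [varWrt, expec]; ring

lemma nonconst_of_mem_Kset [Nonempty Z] {f : Z → ℝ} (hf : f ∈ Kset Z) : Nonconst f := by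
  by_contra h
  rw [Nonconst] at h
  push_neg at h
  obtain ⟨z₀⟩ := ‹Nonempty Z›
  have hc : ∀ z : Z, f z = f z₀ := fun z => h z z₀
  have h1 : ∑ z : Z, f z = (Fintype.card Z : ℝ) * f z₀ := by
    rw [Finset.sum_congr rfl (fun z _ => hc z), Finset.sum_const, Finset.card_univ,
      nsmul_eq_mul]
  have hcard : (0 : ℝ) < (Fintype.card Z : ℝ) := by
    exact_mod_cast Fintype.card_pos
  have hz0 : f z₀ = 0 := by
    have := hf.1
    rw [h1] at this
    rcases mul_eq_zero.mp this with h' | h'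
    · exact absurd h' (ne_of_gt hcard)
    · exact h'
  have : ∑ z : Z, (f z) ^ 2 = 0 := by
    simp_rw [hc, hz0]; simp
  rw [hf.2] at this
  norm_num at this

lemma isCompact_Kset : IsCompact (Kset Z) := by
  apply Metric.isCompact_of_isClosed_isBounded
  · have h1 : IsClosed {f : Z → ℝ | ∑ z : Z, f z = 0} :=
      isClosed_eq (continuous_finset_sum _ fun z _ => continuous_apply z) continuous_const
    have h2 : IsClosed {f : Z → ℝ | ∑ z : Z, (f z) ^ 2 = 1} :=
      isClosed_eq (continuous_finset_sum _ fun z _ => (continuous_apply z).pow 2)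
        continuous_const
    exact h1.inter h2
  · rw [isBounded_iff_forall_norm_le]
    refine ⟨1, fun f hf => ?_⟩
    rw [pi_norm_le_iff_of_nonneg zero_le_one]
    intro z
    have h1 : (f z) ^ 2 ≤ 1 := by
      rw [← hf.2]
      exact Finset.single_le_sum (fun z _ => sq_nonneg (f z)) (Finset.mem_univ z)
    rw [Real.norm_eq_abs]
    nlinarith [sq_abs (f z), abs_nonneg (f z)]

lemma Ksset_nonempty (hcard : 2 ≤ Fintype.card Z) : (Kset Z).Nonempty := by
  haveI : DecidableEq Z := Classical.decEq Z
  obtain ⟨z₀, z₁, hne⟩ := Fintype.exists_pair_of_one_lt_card (α := Z) (by omega)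
  set a : ℝ := (Real.sqrt 2)⁻¹ with ha
  have hsqrt : Real.sqrt 2 * Real.sqrt 2 = 2 := Real.mul_self_sqrt (by norm_num)
  have ha2 : a ^ 2 = 1 / 2 := by
    rw [ha, ← Real.sqrt_inv]
    rw [Real.sq_sqrt (by norm_num)]
    norm_num
  refine ⟨fun z => a * ((if z = z₀ then 1 else 0) - (if z = z₁ then 1 else 0)), ?_, ?_⟩
  · have : ∀ z : Z, a * ((if z = z₀ then (1:ℝ) else 0) - (if z = z₁ then 1 else 0))
        = a * (if z = z₀ then (1:ℝ) else 0) - a * (if z = z₁ then 1 else 0) := fun z => by ring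
    simp_rw [this, Finset.sum_sub_distrib, ← Finset.mul_sum]
    simp
  · have : ∀ z : Z, (a * ((if z = z₀ then (1:ℝ) else 0) - (if z = z₁ then 1 else 0))) ^ 2
        = a ^ 2 * (if z = z₀ then (1:ℝ) else 0) + a ^ 2 * (if z = z₁ then 1 else 0) := by
      intro z
      by_cases h0 : z = z₀
      · subst h0
        rw [if_pos rfl, if_neg hne]; ring
      · rw [if_neg h0]
        by_cases h1 : z = z₁
        · rw [if_pos h1]; ring
        · rw [if_neg h1]; ring
    simp_rw [this, Finset.sum_add_distrib, ← Finset.mul_sum]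
    simp [ha2]
    norm_num

lemma varWrt_lower [Nonempty Z] (η : Z → ℝ) (hη : ∑ z : Z, η z = 1) (c : ℝ)
    (hc0 : 0 ≤ c) (hcle : ∀ z, c ≤ η z) {f : Z → ℝ} (hf : f ∈ Kset Z) :
    c ≤ varWrt η f := by
  rw [varWrt_eq_expec_sq η hη f]
  set m := expec η f with hm
  have hN : (0:ℝ) ≤ (Fintype.card Z : ℝ) := by positivity
  have hsum : ∑ z : Z, (f z - m) ^ 2 = 1 + (Fintype.card Z : ℝ) * m ^ 2 := by
    have h : ∀ z : Z, (f z - m) ^ 2 = f z ^ 2 - (2 * m) * f z + m ^ 2 := fun z => by ring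
    simp_rw [h, Finset.sum_add_distrib, Finset.sum_sub_distrib, ← Finset.mul_sum, hf.1, hf.2,
      Finset.sum_const, Finset.card_univ, nsmul_eq_mul]
    ring
  have step : ∑ z : Z, (f z - m) ^ 2 * c ≤ ∑ z : Z, (f z - m) ^ 2 * η z :=
    Finset.sum_le_sum fun z _ => mul_le_mul_of_nonneg_left (hcle z) (sq_nonneg _)
  have h1 : (1 + (Fintype.card Z : ℝ) * m ^ 2) * c ≤ ∑ z : Z, (f z - m) ^ 2 * η z := by
    rw [← hsum, Finset.sum_mul]
    exact step
  nlinarith [sq_nonneg m, mul_nonneg (mul_nonneg hN (sq_nonneg m)) hc0]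

lemma gPI_eq_sInf_image [Nonempty Z] (M : Z → Z → ℝ) (η : Z → ℝ) (hη : IsPosProb η)
    (c : ℝ) (hc : 0 < c) (hV : ∀ f ∈ Kset Z, c ≤ varWrt η f) :
    gPI η M = sInf ((fun f => dirichletForm η f M / max (varWrt η f) c) '' Kset Z) := by
  unfold gPI
  congr 1
  ext r
  constructor
  · rintro ⟨f, hf, rfl⟩
    set N := (Fintype.card Z : ℝ) with hNdef
    have hN : 0 < N := by
      rw [hNdef]
      exact_mod_cast Fintype.card_pos (α := Z)
    set m := (∑ z : Z, f z) / N with hm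
    set s2 := ∑ z : Z, (f z - m) ^ 2 with hs2
    have hs2pos : 0 < s2 := by
      obtain ⟨z, hz⟩ : ∃ z : Z, f z ≠ m := by
        by_contra hcon
        push_neg at hcon
        obtain ⟨z, z', hzz⟩ := hf
        rw [hcon z, hcon z'] at hzz
        exact hzz rfl
      have h1 : (f z - m) ^ 2 ≤ ∑ w : Z, (f w - m) ^ 2 :=
        Finset.single_le_sum (f := fun w => (f w - m) ^ 2) (fun w _ => sq_nonneg _)
          (Finset.mem_univ z)
      have h2 : 0 < (f z - m) ^ 2 := by
        have hz' : f z - m ≠ 0 := sub_ne_zero.mpr hz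
        positivity
      rw [hs2]
      linarith
    set a : ℝ := (Real.sqrt s2)⁻¹ with ha
    have hapos : 0 < a := by
      rw [ha]
      exact inv_pos.mpr (Real.sqrt_pos.mpr hs2pos)
    have ha2 : a ^ 2 * s2 = 1 := by
      rw [ha, ← Real.sqrt_inv, Real.sq_sqrt (by positivity)]
      exact inv_mul_cancel₀ (ne_of_gt hs2pos)
    have hgmem : (fun z : Z => a * f z + -(a * m)) ∈ Kset Z := by
      constructor
      · show ∑ z : Z, (a * f z + -(a * m)) = 0
        have h : ∀ z : Z, a * f z + -(a * m) = a * f z - a * m := fun z => by ring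
        simp_rw [h, Finset.sum_sub_distrib, ← Finset.mul_sum, Finset.sum_const,
          Finset.card_univ, nsmul_eq_mul, ← hNdef]
        have hNm : N * m = ∑ z : Z, f z := by
          rw [hm]; field_simp
        rw [hNm]
        ring
      · show ∑ z : Z, (a * f z + -(a * m)) ^ 2 = 1
        have h : ∀ z : Z, (a * f z + -(a * m)) ^ 2 = a ^ 2 * (f z - m) ^ 2 := fun z => by ring
        simp_rw [h, ← Finset.mul_sum, ← hs2]
        exact ha2
    refine ⟨_, hgmem, ?_⟩
    show dirichletForm η (fun z : Z => a * f z + -(a * m)) M /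
        max (varWrt η (fun z : Z => a * f z + -(a * m))) c
      = dirichletForm η f M / varWrt η f
    rw [max_eq_left (hV _ hgmem)]
    rw [dirichletForm_affine η M a (-(a * m)) f, varWrt_affine η hη.2 a (-(a * m)) f]
    exact mul_div_mul_left _ _ (by positivity)
  · rintro ⟨f, hfK, rfl⟩
    refine ⟨f, nonconst_of_mem_Kset hfK, ?_⟩
    show dirichletForm η f M / max (varWrt η f) c
      = dirichletForm η f M / varWrt η f
    rw [max_eq_left (hV f hfK)]


end AuxGPI

/-- continuity of the generalised Poincaré constant on `P₊(Z)`
(sequential form). -/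
theorem gPI_continuous
    {Z : Type*} [Fintype Z] (hcard : 2 ≤ Fintype.card Z)
    (M : Z → Z → ℝ) (hgen : IsGenerator M) (hirr : IsIrreducibleGen M)
    (ζ : Z → ℝ) (hζ : IsPosProb ζ)
    (ζseq : ℕ → Z → ℝ) (hζseq : ∀ n, IsPosProb (ζseq n))
    (hconv : ∀ z : Z, Tendsto (fun n => ζseq n z) atTop (nhds (ζ z))) :
    Tendsto (fun n => gPI (ζseq n) M) atTop (nhds (gPI ζ M)) := by
  have hNe : Nonempty Z := Fintype.card_pos_iff.mp (by omega)
  obtain ⟨z₀, -, hz₀⟩ := Finset.exists_min_image Finset.univ ζ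
    ⟨Classical.arbitrary Z, Finset.mem_univ _⟩
  set c : ℝ := ζ z₀ / 2 with hcdef
  have hc : 0 < c := half_pos (hζ.1 z₀)
  set G : (Z → ℝ) → (Z → ℝ) → ℝ := fun η f =>
    dirichletForm (fun z => max (η z) (ζ z / 2)) f M /
      max (varWrt (fun z => max (η z) (ζ z / 2)) f) c with hGdef
  have hcoord : ∀ z : Z, Continuous fun p : (Z → ℝ) × (Z → ℝ) => max (p.1 z) (ζ z / 2) :=
    fun z => ((continuous_apply z).comp continuous_fst).max continuous_const
  have hfc : ∀ z : Z, Continuous fun p : (Z → ℝ) × (Z → ℝ) => p.2 z :=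
    fun z => (continuous_apply z).comp continuous_snd
  have hGcont : Continuous (Function.uncurry G) := by
    apply Continuous.div
    · show Continuous fun p : (Z → ℝ) × (Z → ℝ) =>
        dirichletForm (fun z => max (p.1 z) (ζ z / 2)) p.2 M
      simp only [dirichletForm]
      apply Continuous.mul continuous_const
      apply continuous_finset_sum
      intro z _
      apply continuous_finset_sum
      intro z' _
      exact (continuous_const.mul (hcoord z)).mul (((hfc z).sub (hfc z')).pow 2)
    · show Continuous fun p : (Z → ℝ) × (Z → ℝ) =>
        max (varWrt (fun z => max (p.1 z) (ζ z / 2)) p.2) c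
      apply Continuous.max _ continuous_const
      simp only [varWrt, expec]
      apply Continuous.sub
      · exact continuous_finset_sum _ fun z _ => ((hfc z).pow 2).mul (hcoord z)
      · exact (continuous_finset_sum _ fun z _ => (hfc z).mul (hcoord z)).pow 2
    · intro p
      exact ne_of_gt (lt_of_lt_of_le hc (le_max_right _ _))
  set F : (Z → ℝ) → ℝ := fun η => sInf (G η '' Kset Z) with hFdef
  have hFcont : Continuous F := isCompact_Kset.continuous_sInf hGcont
  have key : ∀ η : Z → ℝ, IsPosProb η → (∀ z, ζ z / 2 ≤ η z) → F η = gPI η M := by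
    intro η hηp hηge
    have hηeq : (fun z => max (η z) (ζ z / 2)) = η :=
      funext fun z => max_eq_left (hηge z)
    have hGeq : G η = fun f => dirichletForm η f M / max (varWrt η f) c := by
      rw [hGdef]
      simp only [hηeq]
    have hVlow : ∀ f ∈ Kset Z, c ≤ varWrt η f := by
      intro f hf
      refine varWrt_lower η hηp.2 c hc.le (fun z => ?_) hf
      calc c = ζ z₀ / 2 := hcdef
        _ ≤ ζ z / 2 := by linarith [hz₀ z (Finset.mem_univ z)]
        _ ≤ η z := hηge z
    rw [hFdef]
    simp only [hGeq]
    exact (gPI_eq_sInf_image M η hηp c hc hVlow).symm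
  have hζgood : ∀ z, ζ z / 2 ≤ ζ z := fun z => by linarith [hζ.1 z]
  have hlim : Tendsto (fun n => F (ζseq n)) atTop (nhds (F ζ)) :=
    (hFcont.tendsto ζ).comp (tendsto_pi_nhds.mpr hconv)
  rw [← key ζ hζ hζgood]
  refine Tendsto.congr' ?_ hlim
  have hev : ∀ᶠ n in atTop, ∀ z : Z, ζ z / 2 < ζseq n z := by
    exact Filter.eventually_all.mpr fun z =>
      (hconv z).eventually (eventually_gt_nhds (half_lt_self (hζ.1 z)))
  filter_upwards [hev] with n hn
  exact key (ζseq n) (hζseq n) fun z => (hn z).le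
end

section
/- Let d ≥ 1 and for each i ∈ {1,…,d} let Z_i be a finite set with |Z_i| ≥ 2, M_i an irreducible generator on Z_i, and ζ_i ∈ P_+(Z_i). Define Z = Π_{i=1}^d Z_i, ζ(z) = Π_{i=1}^d ζ_i(z_i), and M(z,z') = (1/d) Σ_{i=1}^d (M_i(z_i,z'_i) if z_j = z'_j for all j ≠ i, and 0 otherwise). Then M is an irreducible generator on Z, ζ ∈ P_+(Z), and α_gPI(ζ, M) = (1/d) · min_{1 ≤ i ≤ d} α_gPI(ζ_i, M_i). -/
open Finset Filter

section Generic
variable {W : Type*} [Fintype W]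

lemma expec_const (ζ : W → ℝ) (h1 : ∑ z : W, ζ z = 1) (c : ℝ) :
    expec ζ (fun _ => c) = c := by
  simp only [expec, ← Finset.mul_sum, h1, mul_one]

lemma expec_sub (ζ u v : W → ℝ) :
    expec ζ (fun z => u z - v z) = expec ζ u - expec ζ v := by
  simp [expec, sub_mul, Finset.sum_sub_distrib]

lemma expec_smul (ζ u : W → ℝ) (c : ℝ) :
    expec ζ (fun z => c * u z) = c * expec ζ u := by
  simp [expec, Finset.mul_sum, mul_assoc]

lemma expec_mono (ζ u v : W → ℝ) (hζ : ∀ z, 0 ≤ ζ z) (h : ∀ z, u z ≤ v z) :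
    expec ζ u ≤ expec ζ v :=
  Finset.sum_le_sum fun z _ => mul_le_mul_of_nonneg_right (h z) (hζ z)

lemma varWrt_eq (ζ f : W → ℝ) (h1 : ∑ z : W, ζ z = 1) :
    varWrt ζ f = ∑ z : W, (f z - expec ζ f) ^ 2 * ζ z := by
  have h : ∀ z : W, (f z - expec ζ f) ^ 2 * ζ z
      = f z ^ 2 * ζ z - 2 * expec ζ f * (f z * ζ z) + expec ζ f ^ 2 * ζ z := fun z => by ring
  rw [Finset.sum_congr rfl fun z _ => h z]
  rw [Finset.sum_add_distrib, Finset.sum_sub_distrib, ← Finset.mul_sum, ← Finset.mul_sum, h1]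
  simp only [varWrt, expec]
  ring

lemma varWrt_nonneg (ζ f : W → ℝ) (h0 : ∀ z, 0 ≤ ζ z) (h1 : ∑ z : W, ζ z = 1) :
    0 ≤ varWrt ζ f := by
  rw [varWrt_eq ζ f h1]
  exact Finset.sum_nonneg fun z _ => mul_nonneg (sq_nonneg _) (h0 z)

lemma sq_expec_le (ζ f : W → ℝ) (h0 : ∀ z, 0 ≤ ζ z) (h1 : ∑ z : W, ζ z = 1) :
    (expec ζ f) ^ 2 ≤ expec ζ (fun z => f z ^ 2) := by
  have := varWrt_nonneg ζ f h0 h1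
  rw [varWrt] at this; linarith

lemma varWrt_pos (ζ f : W → ℝ) (h0 : ∀ z, 0 < ζ z) (h1 : ∑ z : W, ζ z = 1)
    (hf : Nonconst f) : 0 < varWrt ζ f := by
  obtain ⟨z, z', hzz⟩ := hf
  rw [varWrt_eq ζ f h1]
  have hne : f z ≠ expec ζ f ∨ f z' ≠ expec ζ f := by
    by_contra h; push_neg at h; exact hzz (h.1.trans h.2.symm)
  refine Finset.sum_pos' (fun w _ => mul_nonneg (sq_nonneg _) (h0 w).le) ?_
  rcases hne with h | h
  · exact ⟨z, mem_univ z, mul_pos (by have := sub_ne_zero.mpr h; positivity) (h0 z)⟩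
  · exact ⟨z', mem_univ z', mul_pos (by have := sub_ne_zero.mpr h; positivity) (h0 z')⟩

lemma varWrt_of_const (ζ f : W → ℝ) (h1 : ∑ z : W, ζ z = 1) (hf : ¬ Nonconst f) :
    varWrt ζ f = 0 := by
  simp only [Nonconst, not_exists, ne_eq, not_not] at hf
  have he : ∀ z : W, expec ζ f = f z := by
    intro z
    rw [expec, Finset.sum_congr rfl fun z' _ => by rw [hf z' z], ← Finset.mul_sum, h1, mul_one]
  rw [varWrt_eq ζ f h1]
  exact Finset.sum_eq_zero fun z _ => by rw [← he z, sub_self]; ring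

lemma dirichlet_nonneg (ζ f : W → ℝ) (M : W → W → ℝ)
    (hM : ∀ z z' : W, z ≠ z' → 0 ≤ M z z') (h0 : ∀ z, 0 ≤ ζ z) :
    0 ≤ dirichletForm ζ f M := by
  rw [dirichletForm]
  refine mul_nonneg (by norm_num) (Finset.sum_nonneg fun z _ => Finset.sum_nonneg fun z' _ => ?_)
  rcases eq_or_ne z z' with rfl | h
  · simp
  · exact mul_nonneg (mul_nonneg (hM z z' h) (h0 z)) (sq_nonneg _)

lemma dirichlet_of_const (ζ f : W → ℝ) (M : W → W → ℝ) (hf : ∀ z z' : W, f z = f z') :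
    dirichletForm ζ f M = 0 := by
  rw [dirichletForm]
  rw [Finset.sum_eq_zero fun z _ => Finset.sum_eq_zero fun z' _ => by rw [hf z z', sub_self]; ring]
  ring

lemma gPI_set_nonneg (ζ : W → ℝ) (M : W → W → ℝ) (h0 : ∀ z, 0 < ζ z)
    (h1 : ∑ z : W, ζ z = 1) (hM : ∀ z z' : W, z ≠ z' → 0 ≤ M z z') :
    ∀ r ∈ { r : ℝ | ∃ f : W → ℝ, Nonconst f ∧ r = dirichletForm ζ f M / varWrt ζ f }, 0 ≤ r := by
  rintro r ⟨f, hf, rfl⟩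
  exact div_nonneg (dirichlet_nonneg ζ f M hM fun z => (h0 z).le) (varWrt_pos ζ f h0 h1 hf).le

lemma gPI_nonneg (ζ : W → ℝ) (M : W → W → ℝ) (h0 : ∀ z, 0 < ζ z)
    (h1 : ∑ z : W, ζ z = 1) (hM : ∀ z z' : W, z ≠ z' → 0 ≤ M z z') :
    0 ≤ gPI ζ M :=
  Real.sInf_nonneg (gPI_set_nonneg ζ M h0 h1 hM)

lemma spectral_gap (ζ : W → ℝ) (M : W → W → ℝ) (h0 : ∀ z, 0 < ζ z)
    (h1 : ∑ z : W, ζ z = 1) (hM : ∀ z z' : W, z ≠ z' → 0 ≤ M z z') (f : W → ℝ) :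
    gPI ζ M * varWrt ζ f ≤ dirichletForm ζ f M := by
  by_cases hf : Nonconst f
  · have hV : 0 < varWrt ζ f := varWrt_pos ζ f h0 h1 hf
    have hmem : dirichletForm ζ f M / varWrt ζ f ∈
        { r : ℝ | ∃ g : W → ℝ, Nonconst g ∧ r = dirichletForm ζ g M / varWrt ζ g } :=
      ⟨f, hf, rfl⟩
    have hb : BddBelow { r : ℝ | ∃ g : W → ℝ, Nonconst g ∧ r = dirichletForm ζ g M / varWrt ζ g } :=
      ⟨0, fun r hr => gPI_set_nonneg ζ M h0 h1 hM r hr⟩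
    have := csInf_le hb hmem
    calc gPI ζ M * varWrt ζ f ≤ (dirichletForm ζ f M / varWrt ζ f) * varWrt ζ f :=
          mul_le_mul_of_nonneg_right this hV.le
      _ = dirichletForm ζ f M := div_mul_cancel₀ _ hV.ne'
  · rw [varWrt_of_const ζ f h1 hf, mul_zero]
    simp only [Nonconst, not_exists, ne_eq, not_not] at hf
    exact dirichlet_nonneg ζ f M hM fun z => (h0 z).le

end Generic

section Product
variable {d : ℕ} {Z : Fin d → Type*} [∀ i, Fintype (Z i)] [∀ i, DecidableEq (Z i)]

noncomputable def piMeas (ζi : ∀ i, Z i → ℝ) : (∀ i, Z i) → ℝ := fun z => ∏ i, ζi i (z i)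

noncomputable def avg (ζi : ∀ i, Z i → ℝ) (i : Fin d) (f : (∀ j, Z j) → ℝ) :
    (∀ j, Z j) → ℝ :=
  fun z => expec (ζi i) (fun a => f (Function.update z i a))

noncomputable def vslice (ζi : ∀ i, Z i → ℝ) (i : Fin d) (f : (∀ j, Z j) → ℝ) :
    (∀ j, Z j) → ℝ :=
  fun z => varWrt (ζi i) (fun a => f (Function.update z i a))

variable (ζi : ∀ i, Z i → ℝ)

lemma sum_piMeas (h1 : ∀ i, ∑ a : Z i, ζi i a = 1) : ∑ z : ∀ i, Z i, piMeas ζi z = 1 := by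
  simp only [piMeas]
  rw [← Fintype.prod_sum (fun i a => ζi i a)]
  rw [Finset.prod_congr rfl fun i _ => h1 i, Finset.prod_const_one]

lemma piMeas_update (z : ∀ j, Z j) (i : Fin d) (a : Z i) :
    piMeas ζi (Function.update z i a) * ζi i (z i) = piMeas ζi z * ζi i a := by
  have h1 : ∀ w : ∀ j, Z j, piMeas ζi w = ζi i (w i) * ∏ j ∈ univ.erase i, ζi j (w j) := by
    intro w; rw [piMeas, ← Finset.mul_prod_erase univ _ (mem_univ i)]
  rw [h1, h1]
  have h2 : ∀ j ∈ univ.erase i, ζi j (Function.update z i a j) = ζi j (z j) := by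
    intro j hj
    rw [Function.update_of_ne (Finset.ne_of_mem_erase hj)]
  rw [Finset.prod_congr rfl h2, Function.update_self]
  ring

lemma master (i : Fin d) (g : (∀ j, Z j) → Z i → ℝ) :
    ∑ z : ∀ j, Z j, ∑ a : Z i, piMeas ζi z * ζi i a * g z a
      = ∑ z : ∀ j, Z j, ∑ a : Z i, piMeas ζi z * ζi i a * g (Function.update z i a) (z i) := by
  rw [show (∑ z : ∀ j, Z j, ∑ a : Z i, piMeas ζi z * ζi i a * g z a)
      = ∑ p : (∀ j, Z j) × Z i, piMeas ζi p.1 * ζi i p.2 * g p.1 p.2 from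
    (Fintype.sum_prod_type
      (fun p : (∀ j, Z j) × Z i => piMeas ζi p.1 * ζi i p.2 * g p.1 p.2)).symm]
  rw [show (∑ z : ∀ j, Z j, ∑ a : Z i, piMeas ζi z * ζi i a * g (Function.update z i a) (z i))
      = ∑ p : (∀ j, Z j) × Z i,
          piMeas ζi p.1 * ζi i p.2 * g (Function.update p.1 i p.2) (p.1 i) from
    (Fintype.sum_prod_type
      (fun p : (∀ j, Z j) × Z i =>
        piMeas ζi p.1 * ζi i p.2 * g (Function.update p.1 i p.2) (p.1 i))).symm]
  have einv : Function.Involutive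
      (fun p : (∀ j, Z j) × Z i => (Function.update p.1 i p.2, p.1 i)) := by
    rintro ⟨z, a⟩
    simp [Function.update_idem, Function.update_eq_self]
  refine Fintype.sum_equiv einv.toPerm _ _ ?_
  rintro ⟨z, a⟩
  show piMeas ζi z * ζi i a * g z a
      = piMeas ζi (Function.update z i a) * ζi i (z i)
          * g (Function.update (Function.update z i a) i (z i)) (Function.update z i a i)
  rw [Function.update_self, Function.update_idem, Function.update_eq_self, piMeas_update]

lemma avg_update (i : Fin d) (f : (∀ j, Z j) → ℝ) (z : ∀ j, Z j) (a : Z i) :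
    avg ζi i f (Function.update z i a) = avg ζi i f z := by
  simp [avg, Function.update_idem]

lemma expec_avg (h1 : ∀ i, ∑ a : Z i, ζi i a = 1) (i : Fin d) (f : (∀ j, Z j) → ℝ) :
    expec (piMeas ζi) (avg ζi i f) = expec (piMeas ζi) f := by
  have hL : expec (piMeas ζi) (avg ζi i f)
      = ∑ z : ∀ j, Z j, ∑ a : Z i, piMeas ζi z * ζi i a * f (Function.update z i a) := by
    rw [expec]
    refine Finset.sum_congr rfl fun z _ => ?_
    rw [avg, expec, Finset.sum_mul]
    exact Finset.sum_congr rfl fun a _ => by ring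
  have hR : expec (piMeas ζi) f
      = ∑ z : ∀ j, Z j, ∑ a : Z i, piMeas ζi z * ζi i a * f z := by
    rw [expec]
    refine Finset.sum_congr rfl fun z _ => ?_
    rw [show ∑ a : Z i, piMeas ζi z * ζi i a * f z
        = (piMeas ζi z * f z) * ∑ a : Z i, ζi i a by rw [Finset.mul_sum]; exact Finset.sum_congr rfl fun a _ => by ring]
    rw [h1 i]; ring
  rw [hL, hR]
  exact (master ζi i (fun z _ => f z)).symm

lemma expec_avg_sq (h1 : ∀ i, ∑ a : Z i, ζi i a = 1) (i : Fin d) (f : (∀ j, Z j) → ℝ) :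
    expec (piMeas ζi) (fun z => (avg ζi i f z) ^ 2)
      = expec (piMeas ζi) (fun z => f z * avg ζi i f z) := by
  have h := master ζi i (fun z a => f (Function.update z i a) * avg ζi i f z)
  have hL : expec (piMeas ζi) (fun z => (avg ζi i f z) ^ 2)
      = ∑ z : ∀ j, Z j, ∑ a : Z i,
          piMeas ζi z * ζi i a * (f (Function.update z i a) * avg ζi i f z) := by
    rw [expec]
    refine Finset.sum_congr rfl fun z _ => ?_
    have : avg ζi i f z ^ 2 * piMeas ζi z
        = (∑ a : Z i, f (Function.update z i a) * ζi i a) * (avg ζi i f z * piMeas ζi z) := by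
      rw [avg, expec]; ring
    rw [this, Finset.sum_mul]
    exact Finset.sum_congr rfl fun a _ => by ring
  have hR : expec (piMeas ζi) (fun z => f z * avg ζi i f z)
      = ∑ z : ∀ j, Z j, ∑ a : Z i,
          piMeas ζi z * ζi i a
            * (f (Function.update (Function.update z i a) i (z i))
                * avg ζi i f (Function.update z i a)) := by
    rw [expec]
    refine Finset.sum_congr rfl fun z _ => ?_
    have hsimp : ∀ a : Z i,
        piMeas ζi z * ζi i a
            * (f (Function.update (Function.update z i a) i (z i))
                * avg ζi i f (Function.update z i a))
        = piMeas ζi z * ζi i a * (f z * avg ζi i f z) := by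
      intro a
      rw [Function.update_idem, Function.update_eq_self, avg_update]
    rw [Finset.sum_congr rfl fun a _ => hsimp a, ← Finset.sum_mul,
      show ∑ a : Z i, piMeas ζi z * ζi i a = piMeas ζi z * ∑ a : Z i, ζi i a by rw [Finset.mul_sum],
      h1 i]
    ring
  exact hL.trans (h.trans hR.symm)

lemma varWrt_eq' {W : Type*} [Fintype W] (ζ f : W → ℝ) (h1 : ∑ z : W, ζ z = 1) :
    varWrt ζ f = ∑ z : W, (f z - expec ζ f) ^ 2 * ζ z := by
  have h : ∀ z : W, (f z - expec ζ f) ^ 2 * ζ z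
      = f z ^ 2 * ζ z - 2 * expec ζ f * (f z * ζ z) + expec ζ f ^ 2 * ζ z := fun z => by ring
  rw [Finset.sum_congr rfl fun z _ => h z]
  rw [Finset.sum_add_distrib, Finset.sum_sub_distrib, ← Finset.mul_sum, ← Finset.mul_sum, h1]
  simp only [varWrt, expec]
  ring

lemma vslice_eq (hζi : ∀ i, (∀ a, 0 < ζi i a) ∧ ∑ a : Z i, ζi i a = 1)
    (i : Fin d) (f : (∀ j, Z j) → ℝ) (z : ∀ j, Z j) :
    vslice ζi i f z = ∑ a : Z i, (f (Function.update z i a) - avg ζi i f z) ^ 2 * ζi i a := by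
  rw [vslice, varWrt_eq' _ _ ((hζi i).2)]
  rfl

lemma vslice_nonneg (hζi : ∀ i, (∀ a, 0 < ζi i a) ∧ ∑ a : Z i, ζi i a = 1)
    (i : Fin d) (f : (∀ j, Z j) → ℝ) (z : ∀ j, Z j) : 0 ≤ vslice ζi i f z := by
  rw [vslice_eq ζi hζi]
  exact Finset.sum_nonneg fun a _ => mul_nonneg (sq_nonneg _) ((hζi i).1 a).le

lemma vslice_decomp (i : Fin d) (f : (∀ j, Z j) → ℝ) (z : ∀ j, Z j) :
    vslice ζi i f z = avg ζi i (fun w => f w ^ 2) z - (avg ζi i f z) ^ 2 := rfl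

lemma expec_sub' {W : Type*} [Fintype W] (ζ u v : W → ℝ) :
    expec ζ (fun z => u z - v z) = expec ζ u - expec ζ v := by
  simp [expec, sub_mul, Finset.sum_sub_distrib]

lemma expec_vslice (h1 : ∀ i, ∑ a : Z i, ζi i a = 1) (i : Fin d) (f : (∀ j, Z j) → ℝ) :
    expec (piMeas ζi) (vslice ζi i f)
      = expec (piMeas ζi) (fun z => f z ^ 2)
          - expec (piMeas ζi) (fun z => (avg ζi i f z) ^ 2) := by
  have : vslice ζi i f = fun z => avg ζi i (fun w => f w ^ 2) z - (avg ζi i f z) ^ 2 := rfl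
  rw [this, expec_sub', expec_avg ζi h1]

lemma expec_sub_avg_sq (h1 : ∀ i, ∑ a : Z i, ζi i a = 1) (i : Fin d) (f : (∀ j, Z j) → ℝ) :
    expec (piMeas ζi) (fun z => (f z - avg ζi i f z) ^ 2)
      = expec (piMeas ζi) (fun z => f z ^ 2)
          - expec (piMeas ζi) (fun z => (avg ζi i f z) ^ 2) := by
  have h3 := expec_avg_sq ζi h1 i f
  simp only [expec] at h3 ⊢
  have hexp : ∀ z : ∀ j, Z j, (f z - avg ζi i f z) ^ 2 * piMeas ζi z
      = f z ^ 2 * piMeas ζi z - 2 * (f z * avg ζi i f z * piMeas ζi z)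
        + (avg ζi i f z) ^ 2 * piMeas ζi z := fun z => by ring
  rw [Finset.sum_congr rfl fun z _ => hexp z, Finset.sum_add_distrib, Finset.sum_sub_distrib,
    ← Finset.mul_sum, h3]
  ring

lemma avg_comm (i m : Fin d) (h : i ≠ m) (f : (∀ j, Z j) → ℝ) :
    avg ζi i (avg ζi m f) = avg ζi m (avg ζi i f) := by
  funext z
  simp only [avg, expec, Finset.sum_mul]
  rw [Finset.sum_comm]
  refine Finset.sum_congr rfl fun b _ => Finset.sum_congr rfl fun a _ => ?_
  rw [Function.update_comm h]
  ring

lemma avg_mono (hζi : ∀ i, (∀ a, 0 < ζi i a) ∧ ∑ a : Z i, ζi i a = 1)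
    (i : Fin d) (u v : (∀ j, Z j) → ℝ) (h : ∀ z, u z ≤ v z) (z : ∀ j, Z j) :
    avg ζi i u z ≤ avg ζi i v z :=
  Finset.sum_le_sum fun a _ => mul_le_mul_of_nonneg_right (h _) ((hζi i).1 a).le

lemma sq_expec_le' {W : Type*} [Fintype W] (ζ f : W → ℝ) (h0 : ∀ z, 0 ≤ ζ z)
    (h1 : ∑ z : W, ζ z = 1) : (expec ζ f) ^ 2 ≤ expec ζ (fun z => f z ^ 2) := by
  have h : ∀ z : W, (f z - expec ζ f) ^ 2 * ζ z
      = f z ^ 2 * ζ z - 2 * expec ζ f * (f z * ζ z) + expec ζ f ^ 2 * ζ z := fun z => by ring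
  have h2 : (0:ℝ) ≤ ∑ z : W, (f z - expec ζ f) ^ 2 * ζ z :=
    Finset.sum_nonneg fun z _ => mul_nonneg (sq_nonneg _) (h0 z)
  rw [Finset.sum_congr rfl fun z _ => h z, Finset.sum_add_distrib, Finset.sum_sub_distrib,
    ← Finset.mul_sum, ← Finset.mul_sum, h1] at h2
  simp only [expec] at h2 ⊢
  nlinarith [h2]

lemma vslice_avg_le (hζi : ∀ i, (∀ a, 0 < ζi i a) ∧ ∑ a : Z i, ζi i a = 1)
    (i m : Fin d) (h : i ≠ m) (f : (∀ j, Z j) → ℝ) (z : ∀ j, Z j) :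
    vslice ζi i (avg ζi m f) z ≤ avg ζi m (vslice ζi i f) z := by
  rw [vslice_eq ζi hζi]
  have hmean : avg ζi i (avg ζi m f) z = avg ζi m (avg ζi i f) z := by
    rw [avg_comm ζi i m h]
  have hstep : ∀ a : Z i,
      (avg ζi m f (Function.update z i a) - avg ζi i (avg ζi m f) z) ^ 2
        ≤ avg ζi m (fun w => (f (Function.update w i a) - avg ζi i f w) ^ 2) z := by
    intro a
    rw [hmean]
    have hdiff : avg ζi m f (Function.update z i a) - avg ζi m (avg ζi i f) z
        = expec (ζi m) (fun c => f (Function.update (Function.update z m c) i a)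
            - avg ζi i f (Function.update z m c)) := by
      rw [expec_sub']
      congr 1
      simp only [avg, expec]
      refine Finset.sum_congr rfl fun c _ => ?_
      rw [Function.update_comm h]
    rw [hdiff]
    have := sq_expec_le' (ζi m)
      (fun c => f (Function.update (Function.update z m c) i a)
          - avg ζi i f (Function.update z m c))
      (fun a => ((hζi m).1 a).le) ((hζi m).2)
    refine this.trans_eq ?_
    simp only [avg, expec]
  calc ∑ a : Z i, (avg ζi m f (Function.update z i a) - avg ζi i (avg ζi m f) z) ^ 2 * ζi i a
      ≤ ∑ a : Z i, avg ζi m (fun w => (f (Function.update w i a) - avg ζi i f w) ^ 2) z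
          * ζi i a :=
        Finset.sum_le_sum fun a _ =>
          mul_le_mul_of_nonneg_right (hstep a) ((hζi i).1 a).le
    _ = avg ζi m (vslice ζi i f) z := by
        simp only [avg, expec, Finset.sum_mul]
        rw [Finset.sum_comm]
        refine Finset.sum_congr rfl fun c _ => ?_
        rw [vslice_eq ζi hζi]
        rw [Finset.sum_mul]
        refine Finset.sum_congr rfl fun a _ => ?_
        simp only [avg, expec]
        ring

noncomputable def avgList (ζi : ∀ i, Z i → ℝ) : List (Fin d) → ((∀ j, Z j) → ℝ) → ((∀ j, Z j) → ℝ)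
  | [], f => f
  | (i :: t), f => avg ζi i (avgList ζi t f)

lemma expec_avgList (h1 : ∀ i, ∑ a : Z i, ζi i a = 1) (l : List (Fin d)) (f : (∀ j, Z j) → ℝ) :
    expec (piMeas ζi) (avgList ζi l f) = expec (piMeas ζi) f := by
  induction l with
  | nil => rfl
  | cons i t ih => rw [avgList, expec_avg ζi h1, ih]

lemma expec_mono' {W : Type*} [Fintype W] (ζ u v : W → ℝ) (hζ : ∀ z, 0 ≤ ζ z)
    (h : ∀ z, u z ≤ v z) : expec ζ u ≤ expec ζ v :=
  Finset.sum_le_sum fun z _ => mul_le_mul_of_nonneg_right (h z) (hζ z)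

lemma piMeas_nonneg (hζi : ∀ i, (∀ a, 0 < ζi i a) ∧ ∑ a : Z i, ζi i a = 1) (z : ∀ j, Z j) :
    0 ≤ piMeas ζi z :=
  Finset.prod_nonneg fun i _ => ((hζi i).1 _).le

lemma expec_vslice_avgList_le (hζi : ∀ i, (∀ a, 0 < ζi i a) ∧ ∑ a : Z i, ζi i a = 1)
    (i : Fin d) (l : List (Fin d)) (hi : i ∉ l) (f : (∀ j, Z j) → ℝ) :
    expec (piMeas ζi) (vslice ζi i (avgList ζi l f))
      ≤ expec (piMeas ζi) (vslice ζi i f) := by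
  induction l with
  | nil => exact le_rfl
  | cons m t ih =>
    have him : i ≠ m := fun he => hi (he ▸ List.mem_cons_self)
    have hit : i ∉ t := fun ht => hi (List.mem_cons_of_mem m ht)
    calc expec (piMeas ζi) (vslice ζi i (avg ζi m (avgList ζi t f)))
        ≤ expec (piMeas ζi) (avg ζi m (vslice ζi i (avgList ζi t f))) :=
          expec_mono' _ _ _ (piMeas_nonneg ζi hζi)
            (vslice_avg_le ζi hζi i m him (avgList ζi t f))
      _ = expec (piMeas ζi) (vslice ζi i (avgList ζi t f)) :=
          expec_avg ζi (fun j => (hζi j).2) m _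
      _ ≤ expec (piMeas ζi) (vslice ζi i f) := ih hit

lemma telescope (hζi : ∀ i, (∀ a, 0 < ζi i a) ∧ ∑ a : Z i, ζi i a = 1)
    (l : List (Fin d)) (hl : l.Nodup) (f : (∀ j, Z j) → ℝ) :
    expec (piMeas ζi) (fun z => f z ^ 2)
        - expec (piMeas ζi) (fun z => (avgList ζi l f z) ^ 2)
      ≤ (l.map (fun i => expec (piMeas ζi) (vslice ζi i f))).sum := by
  induction l with
  | nil => simp [avgList]
  | cons i t ih =>
    have hit : i ∉ t := (List.nodup_cons.mp hl).1
    have hnd : t.Nodup := (List.nodup_cons.mp hl).2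
    have step : expec (piMeas ζi) (fun z => (avgList ζi t f z) ^ 2)
        - expec (piMeas ζi) (fun z => (avgList ζi (i :: t) f z) ^ 2)
        ≤ expec (piMeas ζi) (vslice ζi i f) := by
      have he : expec (piMeas ζi) (fun z => (avgList ζi t f z) ^ 2)
          - expec (piMeas ζi) (fun z => (avg ζi i (avgList ζi t f) z) ^ 2)
          = expec (piMeas ζi) (vslice ζi i (avgList ζi t f)) :=
        (expec_vslice ζi (fun j => (hζi j).2) i (avgList ζi t f)).symm
      calc expec (piMeas ζi) (fun z => (avgList ζi t f z) ^ 2)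
          - expec (piMeas ζi) (fun z => (avgList ζi (i :: t) f z) ^ 2)
          = expec (piMeas ζi) (vslice ζi i (avgList ζi t f)) := he
        _ ≤ expec (piMeas ζi) (vslice ζi i f) :=
            expec_vslice_avgList_le ζi hζi i t hit f
    have := ih hnd
    rw [List.map_cons, List.sum_cons]
    linarith

def InvariantC (h : (∀ j, Z j) → ℝ) (j : Fin d) : Prop :=
  ∀ (z : ∀ k, Z k) (a : Z j), h (Function.update z j a) = h z

lemma inv_avg_self (j : Fin d) (f : (∀ k, Z k) → ℝ) : InvariantC (avg ζi j f) j :=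
  fun z a => avg_update ζi j f z a

lemma inv_avg (j m : Fin d) (f : (∀ k, Z k) → ℝ) (h : InvariantC f j) :
    InvariantC (avg ζi m f) j := by
  rcases eq_or_ne m j with rfl | hne
  · exact inv_avg_self ζi m f
  · intro z a
    rw [avg, avg, expec, expec]
    refine Finset.sum_congr rfl fun b _ => ?_
    rw [Function.update_comm (Ne.symm hne), h]

lemma inv_avgList (l : List (Fin d)) (f : (∀ k, Z k) → ℝ) (j : Fin d) (hj : j ∈ l) :
    InvariantC (avgList ζi l f) j := by
  induction l with
  | nil => exact absurd hj List.not_mem_nil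
  | cons i t ih =>
    rcases List.mem_cons.mp hj with rfl | hjt
    · exact inv_avg_self ζi j (avgList ζi t f)
    · exact inv_avg ζi j i (avgList ζi t f) (ih hjt)

lemma const_of_inv (h : (∀ j, Z j) → ℝ) (hinv : ∀ j, InvariantC h j) (z z' : ∀ j, Z j) :
    h z = h z' := by
  have key : ∀ s : Finset (Fin d), h (fun i => if i ∈ s then z' i else z i) = h z := by
    intro s
    induction s using Finset.induction with
    | empty => simp
    | @insert j s hjs ih =>
      have : (fun i => if i ∈ insert j s then z' i else z i)
          = Function.update (fun i => if i ∈ s then z' i else z i) j (z' j) := by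
        funext i
        rcases eq_or_ne i j with rfl | hij
        · rw [Function.update_self, if_pos (Finset.mem_insert_self i s)]
        · rw [Function.update_of_ne hij]
          simp [Finset.mem_insert, hij]
      rw [this, hinv j _ (z' j), ih]
  have := key univ
  simp only [Finset.mem_univ, if_true] at this
  exact this.symm

lemma efron_stein (hζi : ∀ i, (∀ a, 0 < ζi i a) ∧ ∑ a : Z i, ζi i a = 1)
    (f : (∀ j, Z j) → ℝ) :
    varWrt (piMeas ζi) f ≤ ∑ i, expec (piMeas ζi) (vslice ζi i f) := by
  classical
  set l := (univ : Finset (Fin d)).toList with hl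
  have hnd : l.Nodup := Finset.nodup_toList _
  have ht := telescope ζi hζi l hnd f
  have hmem : ∀ j : Fin d, j ∈ l := fun j => by rw [hl]; simp [Finset.mem_toList]
  have hconst : ∀ z z', avgList ζi l f z = avgList ζi l f z' :=
    const_of_inv (avgList ζi l f) (fun j => inv_avgList ζi l f j (hmem j))
  have hnc : ¬ Nonconst (avgList ζi l f) := by
    rintro ⟨z, z', hzz⟩; exact hzz (hconst z z')
  have hvar0 : varWrt (piMeas ζi) (avgList ζi l f) = 0 :=
    varWrt_of_const _ _ (sum_piMeas ζi fun i => (hζi i).2) hnc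
  have hEsq : expec (piMeas ζi) (fun z => (avgList ζi l f z) ^ 2)
      = (expec (piMeas ζi) (avgList ζi l f)) ^ 2 := by
    rw [varWrt] at hvar0; linarith
  have hEavg := expec_avgList ζi (fun i => (hζi i).2) l f
  have hsum : (l.map (fun i => expec (piMeas ζi) (vslice ζi i f))).sum
      = ∑ i, expec (piMeas ζi) (vslice ζi i f) := Finset.sum_map_toList univ _
  rw [varWrt]
  calc expec (piMeas ζi) (fun z => f z ^ 2) - expec (piMeas ζi) f ^ 2
      = expec (piMeas ζi) (fun z => f z ^ 2)
          - expec (piMeas ζi) (fun z => (avgList ζi l f z) ^ 2) := by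
        rw [hEsq, hEavg]
    _ ≤ (l.map (fun i => expec (piMeas ζi) (vslice ζi i f))).sum := ht
    _ = ∑ i, expec (piMeas ζi) (vslice ζi i f) := hsum

lemma collapse (i : Fin d) (z : ∀ j, Z j) (h : (∀ j, Z j) → ℝ) :
    ∑ z' : ∀ j, Z j, (if ∀ j, j ≠ i → z j = z' j then h z' else 0)
      = ∑ b : Z i, h (Function.update z i b) := by
  classical
  have h1 : ∀ b : Z i, h (Function.update z i b)
      = ∑ z' : ∀ j, Z j, if z' = Function.update z i b then h z' else 0 := by
    intro b
    rw [Finset.sum_ite_eq' univ (Function.update z i b) h, if_pos (mem_univ _)]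
  rw [Finset.sum_congr rfl fun b _ => h1 b, Finset.sum_comm]
  refine Finset.sum_congr rfl fun z' _ => ?_
  by_cases hp : ∀ j, j ≠ i → z j = z' j
  · rw [if_pos hp]
    have hiff : ∀ b : Z i, (z' = Function.update z i b) ↔ (b = z' i) := by
      intro b
      constructor
      · intro he; rw [he, Function.update_self]
      · intro hb
        funext j
        rcases eq_or_ne j i with rfl | hj
        · rw [Function.update_self, hb]
        · rw [Function.update_of_ne hj, ← hp j hj]
    rw [Finset.sum_congr rfl fun b _ => if_congr (hiff b) rfl rfl]
    rw [Finset.sum_ite_eq' univ (z' i) (fun _ => h z'), if_pos (mem_univ _)]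
  · rw [if_neg hp]
    refine (Finset.sum_eq_zero fun b _ => ?_).symm
    rw [if_neg]
    intro he
    exact hp fun j hj => by rw [he, Function.update_of_ne hj]

noncomputable def dslice (ζi : ∀ i, Z i → ℝ) (Mi : ∀ i, Z i → Z i → ℝ) (i : Fin d)
    (f : (∀ j, Z j) → ℝ) : (∀ j, Z j) → ℝ :=
  fun z => dirichletForm (ζi i) (fun a => f (Function.update z i a)) (Mi i)

lemma dirichlet_decomp (hζi : ∀ i, (∀ a, 0 < ζi i a) ∧ ∑ a : Z i, ζi i a = 1)
    (Mi : ∀ i, Z i → Z i → ℝ) (M : (∀ j, Z j) → (∀ j, Z j) → ℝ)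
    (hM : ∀ z z', M z z' =
      (1 / (d : ℝ)) * ∑ i,
        (if ∀ j, j ≠ i → z j = z' j then Mi i (z i) (z' i) else 0))
    (f : (∀ j, Z j) → ℝ) :
    dirichletForm (piMeas ζi) f M
      = (1 / (d : ℝ)) * ∑ i, expec (piMeas ζi) (dslice ζi Mi i f) := by
  classical
  -- Step 1: rewrite as (1/2)*(1/d)* ∑ i ∑ z ∑ b ...
  have step1 : dirichletForm (piMeas ζi) f M
      = (1/2) * ((1 / (d : ℝ)) * ∑ i, ∑ z : ∀ j, Z j, ∑ b : Z i,
          Mi i (z i) b * piMeas ζi z * (f z - f (Function.update z i b)) ^ 2) := by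
    rw [dirichletForm]
    congr 1
    have hz : ∀ z z' : ∀ j, Z j, M z z' * piMeas ζi z * (f z - f z') ^ 2
        = (1 / (d : ℝ)) * ∑ i, (if ∀ j, j ≠ i → z j = z' j
            then Mi i (z i) (z' i) * piMeas ζi z * (f z - f z') ^ 2 else 0) := by
      intro z z'
      rw [hM z z', mul_assoc, mul_assoc, Finset.sum_mul]
      congr 1
      refine Finset.sum_congr rfl fun i _ => ?_
      rw [ite_mul, zero_mul, ← mul_assoc]
    calc ∑ z : ∀ j, Z j, ∑ z' : ∀ j, Z j, M z z' * piMeas ζi z * (f z - f z') ^ 2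
        = ∑ z : ∀ j, Z j, ((1 / (d : ℝ)) * ∑ i, ∑ b : Z i,
            Mi i (z i) b * piMeas ζi z * (f z - f (Function.update z i b)) ^ 2) := by
          refine Finset.sum_congr rfl fun z _ => ?_
          rw [Finset.sum_congr rfl fun z' _ => hz z z', ← Finset.mul_sum]
          congr 1
          rw [Finset.sum_comm]
          refine Finset.sum_congr rfl fun i _ => ?_
          rw [collapse i z (fun z' => Mi i (z i) (z' i) * piMeas ζi z * (f z - f z') ^ 2)]
          refine Finset.sum_congr rfl fun b _ => ?_
          rw [Function.update_self]
      _ = (1 / (d : ℝ)) * ∑ i, ∑ z : ∀ j, Z j, ∑ b : Z i,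
            Mi i (z i) b * piMeas ζi z * (f z - f (Function.update z i b)) ^ 2 := by
          rw [← Finset.mul_sum]
          congr 1
          rw [Finset.sum_comm]
  -- Step 2: for each i, ∑ z ∑ b ... = 2 * expec (dslice i)
  have step2 : ∀ i : Fin d, ∑ z : ∀ j, Z j, ∑ b : Z i,
      Mi i (z i) b * piMeas ζi z * (f z - f (Function.update z i b)) ^ 2
      = 2 * expec (piMeas ζi) (dslice ζi Mi i f) := by
    intro i
    set G : (∀ j, Z j) → ℝ :=
      fun z => ∑ b : Z i, Mi i (z i) b * (f z - f (Function.update z i b)) ^ 2 with hG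
    have hGsum : ∑ z : ∀ j, Z j, ∑ b : Z i,
        Mi i (z i) b * piMeas ζi z * (f z - f (Function.update z i b)) ^ 2
        = expec (piMeas ζi) G := by
      rw [expec]
      refine Finset.sum_congr rfl fun z _ => ?_
      rw [hG, Finset.sum_mul]
      exact Finset.sum_congr rfl fun b _ => by ring
    have hAvgG : avg ζi i G = fun z => 2 * dslice ζi Mi i f z := by
      funext z
      simp only [avg, expec, hG, dslice, dirichletForm, Function.update_self,
        Function.update_idem]
      simp only [Finset.sum_mul, Finset.mul_sum]
      exact Finset.sum_congr rfl fun a _ => Finset.sum_congr rfl fun b _ => by ring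
    have h2 := expec_avg ζi (fun j => (hζi j).2) i G
    rw [hGsum, ← h2, hAvgG]
    have : expec (piMeas ζi) (fun z => 2 * dslice ζi Mi i f z)
        = 2 * expec (piMeas ζi) (dslice ζi Mi i f) := by
      simp [expec, Finset.mul_sum, mul_assoc]
    rw [this]
  rw [step1, Finset.sum_congr rfl fun i _ => step2 i, ← Finset.mul_sum]
  ring

lemma expec_piMeas_const (h1 : ∀ i, ∑ a : Z i, ζi i a = 1) (c : ℝ) :
    expec (piMeas ζi) (fun _ => c) = c := by
  rw [expec, ← Finset.mul_sum, sum_piMeas ζi h1, mul_one]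

lemma expec_marginal (h1 : ∀ i, ∑ a : Z i, ζi i a = 1) (i : Fin d) (h : Z i → ℝ) :
    expec (piMeas ζi) (fun z => h (z i)) = expec (ζi i) h := by
  have havg : avg ζi i (fun z => h (z i)) = fun _ => expec (ζi i) h := by
    funext z
    simp only [avg, Function.update_self]
  have h2 := expec_avg ζi h1 i (fun z => h (z i))
  rw [havg, expec_piMeas_const ζi h1] at h2
  exact h2.symm

lemma lift_var (h1 : ∀ i, ∑ a : Z i, ζi i a = 1) (i : Fin d) (h : Z i → ℝ) :
    varWrt (piMeas ζi) (fun z => h (z i)) = varWrt (ζi i) h := by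
  rw [varWrt, varWrt, expec_marginal ζi h1 i h,
    show expec (piMeas ζi) (fun z => h (z i) ^ 2) = expec (ζi i) (fun a => h a ^ 2) from
      expec_marginal ζi h1 i (fun a => h a ^ 2)]

lemma dirichlet_of_const' {W : Type*} [Fintype W] (ζ : W → ℝ) (M : W → W → ℝ) (c : ℝ) :
    dirichletForm ζ (fun _ => c) M = 0 := by
  simp [dirichletForm]

lemma lift_dirichlet (hζi : ∀ i, (∀ a, 0 < ζi i a) ∧ ∑ a : Z i, ζi i a = 1)
    (Mi : ∀ i, Z i → Z i → ℝ) (M : (∀ j, Z j) → (∀ j, Z j) → ℝ)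
    (hM : ∀ z z', M z z' =
      (1 / (d : ℝ)) * ∑ i,
        (if ∀ j, j ≠ i → z j = z' j then Mi i (z i) (z' i) else 0))
    (i₀ : Fin d) (h : Z i₀ → ℝ) :
    dirichletForm (piMeas ζi) (fun z => h (z i₀)) M
      = (1 / (d : ℝ)) * dirichletForm (ζi i₀) h (Mi i₀) := by
  classical
  rw [dirichlet_decomp ζi hζi Mi M hM (fun z => h (z i₀))]
  congr 1
  rw [Finset.sum_eq_single i₀]
  · have hds : dslice ζi Mi i₀ (fun z => h (z i₀))
        = fun _ => dirichletForm (ζi i₀) h (Mi i₀) := by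
      funext z
      simp only [dslice, Function.update_self]
    rw [hds, expec_piMeas_const ζi (fun j => (hζi j).2)]
  · intro j _ hj
    have hds : dslice ζi Mi j (fun z => h (z i₀)) = fun _ => (0:ℝ) := by
      funext z
      have hcst : (fun a : Z j => h (Function.update z j a i₀)) = fun _ => h (z i₀) := by
        funext a
        rw [Function.update_of_ne (Ne.symm hj)]
      simp only [dslice]
      rw [show (fun a : Z j => h (Function.update z j a i₀)) = fun _ => h (z i₀) from hcst]
      exact dirichlet_of_const' _ _ _
    rw [hds, expec_piMeas_const ζi (fun j => (hζi j).2)]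
  · intro hni₀
    exact absurd (mem_univ i₀) hni₀

-- Generator structure of the product
lemma M_offdiag (Mi : ∀ i, Z i → Z i → ℝ)
    (hgen : ∀ i, ∀ a b : Z i, a ≠ b → 0 ≤ Mi i a b)
    (M : (∀ j, Z j) → (∀ j, Z j) → ℝ)
    (hM : ∀ z z', M z z' =
      (1 / (d : ℝ)) * ∑ i,
        (if ∀ j, j ≠ i → z j = z' j then Mi i (z i) (z' i) else 0))
    (z z' : ∀ j, Z j) (hne : z ≠ z') : 0 ≤ M z z' := by
  rw [hM]
  refine mul_nonneg (by positivity) (Finset.sum_nonneg fun i _ => ?_)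
  by_cases hp : ∀ j, j ≠ i → z j = z' j
  · rw [if_pos hp]
    refine hgen i _ _ fun he => hne (funext fun j => ?_)
    rcases eq_or_ne j i with rfl | hj
    · exact he
    · exact hp j hj
  · rw [if_neg hp]

lemma M_rowsum (Mi : ∀ i, Z i → Z i → ℝ)
    (hgen : ∀ i, ∀ a : Z i, ∑ b : Z i, Mi i a b = 0)
    (M : (∀ j, Z j) → (∀ j, Z j) → ℝ)
    (hM : ∀ z z', M z z' =
      (1 / (d : ℝ)) * ∑ i,
        (if ∀ j, j ≠ i → z j = z' j then Mi i (z i) (z' i) else 0))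
    (z : ∀ j, Z j) : ∑ z' : ∀ j, Z j, M z z' = 0 := by
  classical
  rw [Finset.sum_congr rfl fun z' _ => hM z z', ← Finset.mul_sum, Finset.sum_comm]
  have : ∀ i : Fin d, ∑ z' : ∀ j, Z j,
      (if ∀ j, j ≠ i → z j = z' j then Mi i (z i) (z' i) else 0) = 0 := by
    intro i
    rw [collapse i z (fun z' => Mi i (z i) (z' i))]
    rw [Finset.sum_congr rfl fun b _ => by rw [Function.update_self]]
    exact hgen i (z i)
  rw [Finset.sum_congr rfl fun i _ => this i, Finset.sum_const_zero, mul_zero]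

lemma M_single (Mi : ∀ i, Z i → Z i → ℝ)
    (M : (∀ j, Z j) → (∀ j, Z j) → ℝ)
    (hM : ∀ z z', M z z' =
      (1 / (d : ℝ)) * ∑ i,
        (if ∀ j, j ≠ i → z j = z' j then Mi i (z i) (z' i) else 0))
    (z : ∀ j, Z j) (i : Fin d) (b : Z i) (hb : z i ≠ b) :
    M z (Function.update z i b) = (1 / (d : ℝ)) * Mi i (z i) b := by
  classical
  rw [hM]
  congr 1
  rw [Finset.sum_eq_single i]
  · rw [if_pos fun j hj => (Function.update_of_ne hj b z).symm, Function.update_self]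
  · intro k _ hk
    rw [if_neg]
    intro hp
    exact hb ((hp i (Ne.symm hk)).trans (Function.update_self i b z))
  · intro hni
    exact absurd (mem_univ i) hni

end Product

section Paths
variable {W : Type*} [Fintype W]

def HasPath (M : W → W → ℝ) (x y : W) : Prop :=
  ∃ (ℓ : ℕ) (p : ℕ → W), 1 ≤ ℓ ∧ p 0 = x ∧ p ℓ = y ∧
    ∀ n : ℕ, 1 ≤ n → n ≤ ℓ → 0 < M (p (n - 1)) (p n)

lemma hasPath_trans (M : W → W → ℝ) {x y w : W}
    (h1 : HasPath M x y) (h2 : HasPath M y w) : HasPath M x w := by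
  obtain ⟨ℓ₁, p, hℓ₁, hp0, hpe, hps⟩ := h1
  obtain ⟨ℓ₂, q, hℓ₂, hq0, hqe, hqs⟩ := h2
  refine ⟨ℓ₁ + ℓ₂, fun n => if n ≤ ℓ₁ then p n else q (n - ℓ₁), by omega, ?_, ?_, ?_⟩
  · show (if 0 ≤ ℓ₁ then p 0 else q (0 - ℓ₁)) = x
    rw [if_pos (Nat.zero_le ℓ₁)]
    exact hp0
  · show (if ℓ₁ + ℓ₂ ≤ ℓ₁ then p (ℓ₁ + ℓ₂) else q (ℓ₁ + ℓ₂ - ℓ₁)) = w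
    rw [if_neg (by omega), show ℓ₁ + ℓ₂ - ℓ₁ = ℓ₂ by omega]
    exact hqe
  · intro n hn1 hn2
    show 0 < M (if n - 1 ≤ ℓ₁ then p (n - 1) else q (n - 1 - ℓ₁))
        (if n ≤ ℓ₁ then p n else q (n - ℓ₁))
    by_cases hcase : n ≤ ℓ₁
    · rw [if_pos hcase, if_pos (by omega : n - 1 ≤ ℓ₁)]
      exact hps n hn1 hcase
    · rw [if_neg hcase]
      by_cases hc2 : n = ℓ₁ + 1
      · rw [if_pos (by omega : n - 1 ≤ ℓ₁), show n - 1 = ℓ₁ by omega, hpe, ← hq0,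
          show n - ℓ₁ = 1 by omega]
        exact hqs 1 le_rfl hℓ₂
      · rw [if_neg (by omega), show n - 1 - ℓ₁ = n - ℓ₁ - 1 by omega]
        exact hqs (n - ℓ₁) (by omega) (by omega)

lemma gen_diag_nonpos (M : W → W → ℝ)
    (hoff : ∀ z z' : W, z ≠ z' → 0 ≤ M z z') (hrow : ∀ z : W, ∑ z' : W, M z z' = 0)
    (a : W) : M a a ≤ 0 := by
  classical
  have h := hrow a
  rw [← Finset.add_sum_erase univ _ (mem_univ a)] at h
  have h2 : 0 ≤ ∑ b ∈ univ.erase a, M a b :=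
    Finset.sum_nonneg fun b hb => hoff a b (Ne.symm (Finset.ne_of_mem_erase hb))
  linarith

end Paths


section Irred
variable {d : ℕ} {Z : Fin d → Type*} [∀ i, Fintype (Z i)] [∀ i, DecidableEq (Z i)]

lemma lifted_path (Mi : ∀ i, Z i → Z i → ℝ)
    (hgen : ∀ i, (∀ a b : Z i, a ≠ b → 0 ≤ Mi i a b) ∧ ∀ a : Z i, ∑ b : Z i, Mi i a b = 0)
    (M : (∀ j, Z j) → (∀ j, Z j) → ℝ)
    (hM : ∀ z z', M z z' =
      (1 / (d : ℝ)) * ∑ i,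
        (if ∀ j, j ≠ i → z j = z' j then Mi i (z i) (z' i) else 0))
    (hd : 1 ≤ d) (i : Fin d) (z : ∀ j, Z j) (b : Z i) (hb : z i ≠ b)
    (hpath : HasPath (Mi i) (z i) b) :
    HasPath M z (Function.update z i b) := by
  obtain ⟨ℓ, p, hℓ, hp0, hpe, hps⟩ := hpath
  refine ⟨ℓ, fun n => Function.update z i (p n), hℓ, ?_, ?_, ?_⟩
  · show Function.update z i (p 0) = z
    rw [hp0, Function.update_eq_self]
  · show Function.update z i (p ℓ) = Function.update z i b
    rw [hpe]
  intro n hn1 hn2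
  have hstep := hps n hn1 hn2
  have hne : p (n - 1) ≠ p n := by
    intro he
    have hdg := gen_diag_nonpos (Mi i) (hgen i).1 (hgen i).2 (p n)
    rw [he] at hstep
    linarith
  have hupd : Function.update z i (p n)
      = Function.update (Function.update z i (p (n - 1))) i (p n) := by
    rw [Function.update_idem]
  show 0 < M (Function.update z i (p (n - 1))) (Function.update z i (p n))
  rw [hupd, M_single Mi M hM (Function.update z i (p (n - 1))) i (p n)
    (by rw [Function.update_self]; exact hne)]
  have hd0 : (0:ℝ) < d := by exact_mod_cast hd
  rw [Function.update_self]
  positivity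

lemma prod_irred (Mi : ∀ i, Z i → Z i → ℝ)
    (hgen : ∀ i, (∀ a b : Z i, a ≠ b → 0 ≤ Mi i a b) ∧ ∀ a : Z i, ∑ b : Z i, Mi i a b = 0)
    (hirr : ∀ i, ∀ a b : Z i, a ≠ b → HasPath (Mi i) a b)
    (M : (∀ j, Z j) → (∀ j, Z j) → ℝ)
    (hM : ∀ z z', M z z' =
      (1 / (d : ℝ)) * ∑ i,
        (if ∀ j, j ≠ i → z j = z' j then Mi i (z i) (z' i) else 0))
    (hd : 1 ≤ d) :
    ∀ z z' : ∀ j, Z j, z ≠ z' → HasPath M z z' := by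
  classical
  have main : ∀ s : Finset (Fin d), ∀ z z' : ∀ j, Z j,
      (∀ j, j ∉ s → z j = z' j) → z ≠ z' → HasPath M z z' := by
    intro s
    induction s using Finset.induction with
    | empty =>
      intro z z' hout hne
      exact absurd (funext fun j => hout j (Finset.notMem_empty j)) hne
    | @insert i t hit ih =>
      intro z z' hout hne
      by_cases hzi : z i = z' i
      · refine ih z z' (fun j hj => ?_) hne
        rcases eq_or_ne j i with rfl | hji
        · exact hzi
        · exact hout j fun hm => (Finset.mem_insert.mp hm).elim hji hj
      · have hp1 : HasPath M z (Function.update z i (z' i)) :=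
          lifted_path Mi hgen M hM hd i z (z' i) hzi (hirr i (z i) (z' i) hzi)
        by_cases hwz : Function.update z i (z' i) = z'
        · exact hwz ▸ hp1
        · refine hasPath_trans M hp1 (ih (Function.update z i (z' i)) z' (fun j hj => ?_) hwz)
          rcases eq_or_ne j i with rfl | hji
          · exact Function.update_self j (z' j) z
          · rw [Function.update_of_ne hji]
            exact hout j fun hm => (Finset.mem_insert.mp hm).elim hji hj
  intro z z' hne
  exact main univ z z' (fun j hj => absurd (mem_univ j) hj) hne

end Irred


/-- tensorisation of the generalised Poincaré constant. -/
theorem gPI_tensorisation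
    (d : ℕ) (hd : 1 ≤ d)
    (Z : Fin d → Type*) [∀ i, Fintype (Z i)] [∀ i, DecidableEq (Z i)]
    (hcard : ∀ i, 2 ≤ Fintype.card (Z i))
    (Mi : ∀ i, Z i → Z i → ℝ)
    (hgen : ∀ i, IsGenerator (Mi i)) (hirr : ∀ i, IsIrreducibleGen (Mi i))
    (ζi : ∀ i, Z i → ℝ) (hζi : ∀ i, IsPosProb (ζi i))
    (ζ : (∀ i, Z i) → ℝ) (hζ : ∀ z, ζ z = ∏ i, ζi i (z i))
    (M : (∀ i, Z i) → (∀ i, Z i) → ℝ)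
    (hM : ∀ z z', M z z' =
      (1 / (d : ℝ)) * ∑ i,
        (if ∀ j, j ≠ i → z j = z' j then Mi i (z i) (z' i) else 0)) :
    IsGenerator M ∧ IsIrreducibleGen M ∧ IsPosProb ζ ∧
      gPI ζ M = (1 / (d : ℝ)) * sInf (Set.range fun i => gPI (ζi i) (Mi i)) := by
  classical
  have hζfun : ζ = piMeas ζi := funext hζ
  subst hζfun
  have hζi' : ∀ i, (∀ a, 0 < ζi i a) ∧ ∑ a : Z i, ζi i a = 1 := fun i => ⟨(hζi i).1, (hζi i).2⟩
  have h1 : ∀ i, ∑ a : Z i, ζi i a = 1 := fun i => (hζi i).2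
  have hπpos : ∀ z, 0 < piMeas ζi z := fun z => Finset.prod_pos fun i _ => (hζi i).1 _
  have hπ1 : ∑ z : ∀ i, Z i, piMeas ζi z = 1 := sum_piMeas ζi h1
  have hGen : IsGenerator M :=
    ⟨M_offdiag Mi (fun i => (hgen i).1) M hM, M_rowsum Mi (fun i => (hgen i).2) M hM⟩
  have hMoff : ∀ z z', z ≠ z' → 0 ≤ M z z' := hGen.1
  have hIrr : IsIrreducibleGen M := fun z z' hne =>
    prod_irred Mi (fun i => ⟨(hgen i).1, (hgen i).2⟩)
      (fun i a b hab => hirr i a b hab) M hM hd z z' hne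
  have hPos : IsPosProb (piMeas ζi) := ⟨hπpos, hπ1⟩
  refine ⟨hGen, hIrr, hPos, ?_⟩
  -- setup
  haveI : ∀ i, Nonempty (Z i) := fun i =>
    Fintype.card_pos_iff.mp (lt_of_lt_of_le (by norm_num) (hcard i))
  haveI : Nonempty (∀ i, Z i) := ⟨fun i => Classical.arbitrary _⟩
  haveI : Nonempty (Fin d) := ⟨⟨0, hd⟩⟩
  have hd0 : (0:ℝ) < d := by exact_mod_cast hd
  have hnci : ∀ i, ∃ g : Z i → ℝ, Nonconst g := by
    intro i
    obtain ⟨a, b, hab⟩ := Fintype.exists_pair_of_one_lt_card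
      (lt_of_lt_of_le (by norm_num) (hcard i))
    exact ⟨fun x => if x = a then 1 else 0, a, b, by simp [if_neg (Ne.symm hab)]⟩
  have hliftnc : ∀ (i : Fin d) (g : Z i → ℝ), Nonconst g →
      Nonconst (fun z : ∀ j, Z j => g (z i)) := by
    intro i g ⟨a, b, hab⟩
    have z0 : ∀ j, Z j := Classical.arbitrary _
    refine ⟨Function.update z0 i a, Function.update z0 i b, ?_⟩
    simp only [Function.update_self]
    exact hab
  have hTne : ∀ i : Fin d,
      { r : ℝ | ∃ f : Z i → ℝ, Nonconst f ∧
        r = dirichletForm (ζi i) f (Mi i) / varWrt (ζi i) f }.Nonempty := by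
    intro i
    obtain ⟨g, hg⟩ := hnci i
    exact ⟨_, g, hg, rfl⟩
  have hSne : { r : ℝ | ∃ f : (∀ j, Z j) → ℝ, Nonconst f ∧
      r = dirichletForm (piMeas ζi) f M / varWrt (piMeas ζi) f }.Nonempty := by
    obtain ⟨g, hg⟩ := hnci ⟨0, hd⟩
    exact ⟨_, fun z => g (z ⟨0, hd⟩), hliftnc _ g hg, rfl⟩
  have hSbdd : BddBelow { r : ℝ | ∃ f : (∀ j, Z j) → ℝ, Nonconst f ∧
      r = dirichletForm (piMeas ζi) f M / varWrt (piMeas ζi) f } :=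
    ⟨0, fun r hr => gPI_set_nonneg (piMeas ζi) M hπpos hπ1 hMoff r hr⟩
  have hα0 : ∀ i, 0 ≤ gPI (ζi i) (Mi i) := fun i =>
    gPI_nonneg (ζi i) (Mi i) (hζi i).1 (hζi i).2 (hgen i).1
  have hrne : (Set.range fun i => gPI (ζi i) (Mi i)).Nonempty := Set.range_nonempty _
  have hrbdd : BddBelow (Set.range fun i => gPI (ζi i) (Mi i)) := by
    refine ⟨0, ?_⟩
    rintro r ⟨j, rfl⟩
    exact hα0 j
  have hαmin_le : ∀ i, sInf (Set.range fun i => gPI (ζi i) (Mi i)) ≤ gPI (ζi i) (Mi i) :=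
    fun i => csInf_le hrbdd ⟨i, rfl⟩
  have hαmin0 : 0 ≤ sInf (Set.range fun i => gPI (ζi i) (Mi i)) := by
    refine Real.sInf_nonneg ?_
    rintro r ⟨j, rfl⟩
    exact hα0 j
  obtain ⟨i₀, hi₀⟩ := Set.Nonempty.csInf_mem hrne (Set.finite_range _)
  -- LOWER BOUND
  have hlow : (1 / (d:ℝ)) * sInf (Set.range fun i => gPI (ζi i) (Mi i)) ≤ gPI (piMeas ζi) M := by
    rw [show gPI (piMeas ζi) M = sInf { r : ℝ | ∃ f : (∀ j, Z j) → ℝ, Nonconst f ∧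
        r = dirichletForm (piMeas ζi) f M / varWrt (piMeas ζi) f } from rfl]
    refine le_csInf hSne ?_
    rintro r ⟨f, hf, rfl⟩
    set αm := sInf (Set.range fun i => gPI (ζi i) (Mi i)) with hαm
    have hV : 0 < varWrt (piMeas ζi) f := varWrt_pos (piMeas ζi) f hπpos hπ1 hf
    have hD : (1 / (d:ℝ)) * (αm * varWrt (piMeas ζi) f) ≤ dirichletForm (piMeas ζi) f M := by
      rw [dirichlet_decomp ζi hζi' Mi M hM f]
      have hslice : ∀ (i : Fin d) (z : ∀ j, Z j),
          αm * vslice ζi i f z ≤ dslice ζi Mi i f z := by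
        intro i z
        have hsg := spectral_gap (ζi i) (Mi i) (hζi i).1 (hζi i).2 (hgen i).1
          (fun a => f (Function.update z i a))
        have h2 : αm * vslice ζi i f z ≤ gPI (ζi i) (Mi i) * vslice ζi i f z :=
          mul_le_mul_of_nonneg_right (hαmin_le i) (vslice_nonneg ζi hζi' i f z)
        exact h2.trans hsg
      have hEin : ∀ i : Fin d, αm * expec (piMeas ζi) (vslice ζi i f)
          ≤ expec (piMeas ζi) (dslice ζi Mi i f) := by
        intro i
        rw [← expec_smul (piMeas ζi) (vslice ζi i f) αm]
        exact expec_mono (piMeas ζi) _ _ (fun z => (hπpos z).le) (hslice i)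
      have hES := efron_stein ζi hζi' f
      have hmain : αm * varWrt (piMeas ζi) f
          ≤ ∑ i, expec (piMeas ζi) (dslice ζi Mi i f) := by
        calc αm * varWrt (piMeas ζi) f
            ≤ αm * ∑ i, expec (piMeas ζi) (vslice ζi i f) :=
              mul_le_mul_of_nonneg_left hES hαmin0
          _ = ∑ i, αm * expec (piMeas ζi) (vslice ζi i f) := Finset.mul_sum _ _ _
          _ ≤ ∑ i, expec (piMeas ζi) (dslice ζi Mi i f) :=
              Finset.sum_le_sum fun i _ => hEin i
      have h1d : (0:ℝ) ≤ 1 / (d:ℝ) := by positivity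
      exact mul_le_mul_of_nonneg_left hmain h1d
    rw [le_div_iff₀ hV]
    calc 1 / (d:ℝ) * αm * varWrt (piMeas ζi) f
        = (1 / (d:ℝ)) * (αm * varWrt (piMeas ζi) f) := by ring
      _ ≤ dirichletForm (piMeas ζi) f M := hD
  -- UPPER BOUND
  have hup : gPI (piMeas ζi) M ≤ (1 / (d:ℝ)) * sInf (Set.range fun i => gPI (ζi i) (Mi i)) := by
    rw [← hi₀]
    have key : ∀ r ∈ { r : ℝ | ∃ f : Z i₀ → ℝ, Nonconst f ∧
        r = dirichletForm (ζi i₀) f (Mi i₀) / varWrt (ζi i₀) f },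
        gPI (piMeas ζi) M ≤ (1 / (d:ℝ)) * r := by
      rintro r ⟨g, hg, rfl⟩
      have hmem : (1 / (d:ℝ)) * (dirichletForm (ζi i₀) g (Mi i₀) / varWrt (ζi i₀) g)
          ∈ { r : ℝ | ∃ f : (∀ j, Z j) → ℝ, Nonconst f ∧
            r = dirichletForm (piMeas ζi) f M / varWrt (piMeas ζi) f } := by
        refine ⟨fun z => g (z i₀), hliftnc i₀ g hg, ?_⟩
        rw [lift_dirichlet ζi hζi' Mi M hM i₀ g, lift_var ζi h1 i₀ g, mul_div_assoc]
      exact csInf_le hSbdd hmem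
    have hdd : (d:ℝ) * gPI (piMeas ζi) M ≤ gPI (ζi i₀) (Mi i₀) := by
      rw [show gPI (ζi i₀) (Mi i₀) = sInf { r : ℝ | ∃ f : Z i₀ → ℝ, Nonconst f ∧
          r = dirichletForm (ζi i₀) f (Mi i₀) / varWrt (ζi i₀) f } from rfl]
      refine le_csInf (hTne i₀) ?_
      intro r hr
      have hk := key r hr
      have : gPI (piMeas ζi) M ≤ r / d := by
        rw [div_eq_mul_inv, mul_comm]
        calc gPI (piMeas ζi) M ≤ (1 / (d:ℝ)) * r := hk
          _ = (d:ℝ)⁻¹ * r := by rw [one_div]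
      calc (d:ℝ) * gPI (piMeas ζi) M ≤ (d:ℝ) * (r / d) :=
            mul_le_mul_of_nonneg_left this hd0.le
        _ = r := by field_simp
    calc gPI (piMeas ζi) M = (1 / (d:ℝ)) * ((d:ℝ) * gPI (piMeas ζi) M) := by
          field_simp
      _ ≤ (1 / (d:ℝ)) * gPI (ζi i₀) (Mi i₀) :=
          mul_le_mul_of_nonneg_left hdd (by positivity)
  exact le_antisymm hup hlow
end
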